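/- arXiv:math/0404369 — 3 statements merged into one kernel-verified Lean document; each statement's English description precedes it below -/
import Mathlib

section
/- Let I be a graded ideal of S (an ideal which is also a vector subspace spanned by its homogeneous components) with I_W ⊆ I. Then I = I_W if and only if the product of all positive roots d = ∏_{α∈Π⁺} α does not belong to I. -/
open MvPolynomial

attribute [local instance] Classical.propDecidable

noncomputable section

/-- `V l` is the model `l`-dimensional real inner product space. -/
abbrev V (l : ℕ) := EuclideanSpace ℝ (Fin l)

/-- `S l` is the algebra of real polynomial functions on `V l`. -/
abbrev S (l : ℕ) := MvPolynomial (Fin l) ℝ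

/-- A linear functional on `V l` regarded as a (degree-one) polynomial function. -/
def linPoly {l : ℕ} (μ : V l →ₗ[ℝ] ℝ) : S l :=
  ∑ i : Fin l, MvPolynomial.C (μ (EuclideanSpace.single i 1)) * MvPolynomial.X i

/-- The action of a linear isometry `g` of `V l` on polynomial functions,
`(g • f)(x) = f (g⁻¹ x)`. -/
def polyAct {l : ℕ} (g : V l ≃ₗᵢ[ℝ] V l) : S l →ₐ[ℝ] S l :=
  MvPolynomial.aeval fun i =>
    linPoly (((EuclideanSpace.basisFun (Fin l) ℝ).toBasis.coord i) ∘ₗ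
      g.symm.toLinearEquiv.toLinearMap)

/-- The vector of `V l` representing a linear functional via the inner product. -/
def dualVec {l : ℕ} (μ : V l →ₗ[ℝ] ℝ) : V l :=
  (InnerProductSpace.toDual ℝ (V l)).symm (LinearMap.toContinuousLinearMap μ)

/-- The orthogonal reflection of `V l` in the hyperplane `ker μ`. -/
def reflKer {l : ℕ} (μ : V l →ₗ[ℝ] ℝ) (x : V l) : V l :=
  x - (2 * μ x / μ (dualVec μ)) • dualVec μ

/-- The setting of the paper: a finite group `W` of orthogonal transformations of `V l`
generated by reflections, with reduced root system `roots ⊆ V*`, positive system `pos`,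
simple roots `γ 1, …, γ l`, and for each root `α` the reflection `s α ∈ W` in `ker α`. -/
structure Setting (l : ℕ) where
  W : Subgroup (V l ≃ₗᵢ[ℝ] V l)
  W_finite : (W : Set (V l ≃ₗᵢ[ℝ] V l)).Finite
  roots : Finset (V l →ₗ[ℝ] ℝ)
  roots_ne_zero : ∀ α ∈ roots, α ≠ 0
  s : (V l →ₗ[ℝ] ℝ) → (V l ≃ₗᵢ[ℝ] V l)
  s_mem : ∀ α ∈ roots, s α ∈ W
  s_apply : ∀ α ∈ roots, ∀ x, s α x = reflKer α x
  W_gen : W = Subgroup.closure {g | ∃ α ∈ roots, g = s α}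
  roots_W_invariant : ∀ α ∈ roots, ∀ w ∈ W,
    α ∘ₗ w.symm.toLinearEquiv.toLinearMap ∈ roots
  roots_reduced : ∀ α ∈ roots, ∀ c : ℝ, c • α ∈ roots → c = 1 ∨ c = -1
  pos : Finset (V l →ₗ[ℝ] ℝ)
  pos_subset : pos ⊆ roots
  pos_cover : ∀ α ∈ roots, α ∈ pos ∨ -α ∈ pos
  pos_disjoint : ∀ α ∈ pos, -α ∉ pos
  γ : Fin l → (V l →ₗ[ℝ] ℝ)
  γ_mem : ∀ i, γ i ∈ pos
  γ_indep : LinearIndependent ℝ γ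
  pos_sum : ∀ β ∈ pos, ∃ c : Fin l → ℝ, (∀ i, 0 ≤ c i) ∧ β = ∑ i, c i • γ i

variable {l : ℕ}

/-- The divided difference operator `Δ_α f = (f - s_α·f)/α`. -/
def divDiff (St : Setting l) (α : V l →ₗ[ℝ] ℝ) (f : S l) : S l :=
  if h : ∃ c : S l, f - polyAct (St.s α) f = linPoly α * c then h.choose else 0

/-- The length of `w` with respect to the simple reflections `s (γ i)`. -/
def len (St : Setting l) (w : V l ≃ₗᵢ[ℝ] V l) : ℕ :=
  sInf {n | ∃ c : List (Fin l), c.length = n ∧ (c.map fun i => St.s (St.γ i)).prod = w}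

/-- The composite divided difference operator along a word in the simple roots. -/
def divDiffWord (St : Setting l) (c : List (Fin l)) : S l → S l :=
  c.foldr (fun i F => divDiff St (St.γ i) ∘ F) id

/-- The operator `Δ_w`, defined through a chosen reduced word for `w`. -/
def divDiffW (St : Setting l) (w : V l ≃ₗᵢ[ℝ] V l) : S l → S l :=
  if h : ∃ c : List (Fin l),
      (c.map fun i => St.s (St.γ i)).prod = w ∧ c.length = len St w
  then divDiffWord St h.choose else id

/-- The ideal `I_W` of `S` generated by the nonconstant `W`-invariant polynomials
(equivalently, by the `W`-invariant polynomials with zero constant term). -/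
def IW (St : Setting l) : Ideal (S l) :=
  Ideal.span {f : S l | (∀ w ∈ St.W, polyAct w f = f) ∧ MvPolynomial.constantCoeff f = 0}

/-- The degree-`k` homogeneous component `I^k = I ∩ S^k` of an ideal of `S l`,
as a real subspace. -/
def gradedPiece (I : Ideal (S l)) (k : ℕ) : Submodule ℝ (S l) :=
  (I.restrictScalars ℝ) ⊓ (MvPolynomial.homogeneousSubmodule (Fin l) ℝ k)

/-- The product `d = ∏_{α ∈ Π⁺} α` of all positive roots. -/
def dPoly (St : Setting l) : S l := ∏ α ∈ St.pos, linPoly α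

/-- `I` is a graded ideal: it contains the homogeneous components of its elements. -/
def IsGradedIdeal (I : Ideal (S l)) : Prop :=
  ∀ f ∈ I, ∀ n : ℕ, MvPolynomial.homogeneousComponent n f ∈ I


/-- The inner product on `V*` induced by the inner product on `V l`. -/
def dualInner {l : ℕ} (μ ν : V l →ₗ[ℝ] ℝ) : ℝ :=
  inner ℝ (dualVec μ) (dualVec ν)

namespace Stmt10

variable {l : ℕ}

lemma coordL_apply (i : Fin l) (x : V l) :
    ((EuclideanSpace.basisFun (Fin l) ℝ).toBasis.coord i) x = x i := by
  simp [Module.Basis.coord_apply]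

lemma euclid_decomp (x : V l) : x = ∑ i, x i • EuclideanSpace.single i (1:ℝ) := by
  ext j
  rw [WithLp.ofLp_sum, Finset.sum_apply]
  simp [EuclideanSpace.single_apply]

lemma lin_sum (μ : V l →ₗ[ℝ] ℝ) (x : V l) :
    μ x = ∑ i, x i * μ (EuclideanSpace.single i (1:ℝ)) := by
  conv_lhs => rw [euclid_decomp x]
  rw [map_sum]
  simp [smul_eq_mul]

/-- Evaluation of a polynomial at a point of `V l`. -/
def evalV (x : V l) (f : S l) : ℝ := eval (fun i => x i) f

lemma evalV_linPoly (μ : V l →ₗ[ℝ] ℝ) (x : V l) : evalV x (linPoly μ) = μ x := by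
  rw [evalV, linPoly, lin_sum μ x]
  simp [mul_comm]

lemma funextV {f g : S l} (h : ∀ x : V l, evalV x f = evalV x g) : f = g := by
  apply MvPolynomial.funext
  intro x
  have := h (WithLp.toLp 2 x)
  simpa [evalV] using this

lemma eval_aeval' (x : Fin l → ℝ) (q : Fin l → S l) (f : S l) :
    eval x (aeval q f) = eval (fun i => eval x (q i)) f := by
  induction f using MvPolynomial.induction_on with
  | C a => simp
  | add p q hp hq => rw [map_add, map_add, hp, hq, eval_add]
  | mul_X p i hp => rw [map_mul, aeval_X, eval_mul, eval_mul, hp, eval_X]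

lemma evalV_polyAct (g : V l ≃ₗᵢ[ℝ] V l) (f : S l) (x : V l) :
    evalV x (polyAct g f) = evalV (g.symm x) f := by
  rw [evalV, polyAct, eval_aeval']
  have hfun : (fun i => eval (fun j => x j)
      (linPoly ((EuclideanSpace.basisFun (Fin l) ℝ).toBasis.coord i ∘ₗ
        g.symm.toLinearEquiv.toLinearMap))) = fun i => g.symm x i := by
    funext i
    have h2 := evalV_linPoly ((EuclideanSpace.basisFun (Fin l) ℝ).toBasis.coord i ∘ₗ
        g.symm.toLinearEquiv.toLinearMap) x
    rw [evalV] at h2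
    rw [h2, LinearMap.comp_apply, coordL_apply]
    rfl
  rw [hfun]
  rfl

end Stmt10

namespace Stmt10

variable {l : ℕ}

lemma polyAct_one (f : S l) : polyAct (1 : V l ≃ₗᵢ[ℝ] V l) f = f := by
  apply funextV
  intro x
  rw [evalV_polyAct]
  rfl

lemma polyAct_mul (u v : V l ≃ₗᵢ[ℝ] V l) (f : S l) :
    polyAct (u * v) f = polyAct u (polyAct v f) := by
  apply funextV
  intro x
  rw [evalV_polyAct, evalV_polyAct, evalV_polyAct]
  rfl

lemma linPoly_add (μ ν : V l →ₗ[ℝ] ℝ) : linPoly (μ + ν) = linPoly μ + linPoly ν := by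
  apply funextV
  intro x
  rw [evalV_linPoly, evalV, eval_add]
  rw [show (eval fun i => x i) (linPoly μ) = evalV x (linPoly μ) from rfl,
    show (eval fun i => x i) (linPoly ν) = evalV x (linPoly ν) from rfl,
    evalV_linPoly, evalV_linPoly]
  rfl

lemma linPoly_neg (μ : V l →ₗ[ℝ] ℝ) : linPoly (-μ) = -linPoly μ := by
  apply funextV
  intro x
  rw [evalV_linPoly, evalV, eval_neg,
    show (eval fun i => x i) (linPoly μ) = evalV x (linPoly μ) from rfl, evalV_linPoly]
  rfl

lemma linPoly_smul (c : ℝ) (μ : V l →ₗ[ℝ] ℝ) : linPoly (c • μ) = C c * linPoly μ := by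
  apply funextV
  intro x
  rw [evalV_linPoly, evalV, eval_mul, eval_C,
    show (eval fun i => x i) (linPoly μ) = evalV x (linPoly μ) from rfl, evalV_linPoly]
  rfl

lemma linPoly_eq_zero {μ : V l →ₗ[ℝ] ℝ} (h : linPoly μ = 0) : μ = 0 := by
  ext x
  have := evalV_linPoly μ x
  rw [h] at this
  simpa [evalV] using this.symm

lemma linPoly_ne_zero {μ : V l →ₗ[ℝ] ℝ} (h : μ ≠ 0) : linPoly μ ≠ 0 :=
  fun hc => h (linPoly_eq_zero hc)

lemma polyAct_linPoly (g : V l ≃ₗᵢ[ℝ] V l) (μ : V l →ₗ[ℝ] ℝ) :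
    polyAct g (linPoly μ) = linPoly (μ ∘ₗ g.symm.toLinearEquiv.toLinearMap) := by
  apply funextV
  intro x
  rw [evalV_polyAct, evalV_linPoly, evalV_linPoly]
  rfl

lemma linPoly_isHomogeneous (μ : V l →ₗ[ℝ] ℝ) : (linPoly μ).IsHomogeneous 1 := by
  rw [linPoly]
  apply IsHomogeneous.sum
  intro i _
  simpa using (isHomogeneous_C (Fin l) (μ (EuclideanSpace.single i (1:ℝ)))).mul
    (isHomogeneous_X ℝ i)

lemma degree_of_mem_support {f : S l} {n : ℕ} (hf : f.IsHomogeneous n) {d : Fin l →₀ ℕ}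
    (hd : d ∈ f.support) : d.degree = n := by
  by_contra h
  exact mem_support_iff.mp hd (hf.coeff_eq_zero h)

lemma polyAct_isHomogeneous {f : S l} {n : ℕ} (g : V l ≃ₗᵢ[ℝ] V l)
    (hf : f.IsHomogeneous n) : (polyAct g f).IsHomogeneous n := by
  rw [polyAct, aeval_def, eval₂_eq]
  apply IsHomogeneous.sum
  intro d hd
  rw [MvPolynomial.algebraMap_eq]
  have h1 : (∏ i ∈ d.support,
      (linPoly ((EuclideanSpace.basisFun (Fin l) ℝ).toBasis.coord i ∘ₗ
        g.symm.toLinearEquiv.toLinearMap)) ^ d i).IsHomogeneous (∑ i ∈ d.support, d i) := by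
    apply IsHomogeneous.prod
    intro i _
    simpa using (linPoly_isHomogeneous _).pow (d i)
  have h2 : (∑ i ∈ d.support, d i) = n := degree_of_mem_support hf hd
  rw [h2] at h1
  simpa using (isHomogeneous_C (Fin l) (coeff d f)).mul h1

lemma hc_mul_homog (p : S l) {g : S l} {m : ℕ} (hg : g.IsHomogeneous m) (n : ℕ) :
    homogeneousComponent (n + m) (p * g) = homogeneousComponent n p * g := by
  conv_lhs => rw [← sum_homogeneousComponent p, Finset.sum_mul, map_sum]
  have each : ∀ k, homogeneousComponent (n + m) (homogeneousComponent k p * g)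
      = if n = k then homogeneousComponent k p * g else 0 := by
    intro k
    have hk : (homogeneousComponent k p * g).IsHomogeneous (k + m) :=
      (homogeneousComponent_isHomogeneous k p).mul hg
    rw [homogeneousComponent_of_mem ((mem_homogeneousSubmodule _ _).mpr hk)]
    by_cases h : n = k
    · rw [if_pos (by omega), if_pos h]
    · rw [if_neg (by omega), if_neg h]
  have each' : ∀ k, homogeneousComponent (n + m) (homogeneousComponent k p * g)
      = if k = n then homogeneousComponent k p * g else 0 := by
    intro k; rw [each k]; by_cases h : n = k
    · rw [if_pos h, if_pos h.symm]
    · rw [if_neg h, if_neg (fun hh => h hh.symm)]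
  rw [Finset.sum_congr rfl (fun k _ => each' k)]
  rw [Finset.sum_ite_eq' (Finset.range (p.totalDegree + 1)) n
    (fun k => homogeneousComponent k p * g)]
  by_cases h : n ∈ Finset.range (p.totalDegree + 1)
  · rw [if_pos h]
  · rw [if_neg h, homogeneousComponent_eq_zero, zero_mul]
    simp only [Finset.mem_range] at h
    omega

lemma hc_polyAct (g : V l ≃ₗᵢ[ℝ] V l) (p : S l) (n : ℕ) :
    homogeneousComponent n (polyAct g p) = polyAct g (homogeneousComponent n p) := by
  conv_lhs => rw [← sum_homogeneousComponent p, map_sum, map_sum]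
  have each : ∀ k, homogeneousComponent n (polyAct g (homogeneousComponent k p))
      = if n = k then polyAct g (homogeneousComponent k p) else 0 := by
    intro k
    have hk := polyAct_isHomogeneous g (homogeneousComponent_isHomogeneous k p)
    rw [homogeneousComponent_of_mem ((mem_homogeneousSubmodule _ _).mpr hk)]
  have each' : ∀ k, homogeneousComponent n (polyAct g (homogeneousComponent k p))
      = if k = n then polyAct g (homogeneousComponent k p) else 0 := by
    intro k; rw [each k]; by_cases h : n = k
    · rw [if_pos h, if_pos h.symm]
    · rw [if_neg h, if_neg (fun hh => h hh.symm)]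
  rw [Finset.sum_congr rfl (fun k _ => each' k)]
  rw [Finset.sum_ite_eq' (Finset.range (p.totalDegree + 1)) n
    (fun k => polyAct g (homogeneousComponent k p))]
  by_cases h : n ∈ Finset.range (p.totalDegree + 1)
  · rw [if_pos h]
  · rw [if_neg h, homogeneousComponent_eq_zero, map_zero]
    simp only [Finset.mem_range] at h
    omega

lemma homog_of_factor {g h : S l} {m n : ℕ} (hg : g.IsHomogeneous m) (hg0 : g ≠ 0)
    (hgh : (g * h).IsHomogeneous n) : h = homogeneousComponent (n - m) h := by
  by_cases h0 : h = 0
  · rw [h0, map_zero]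
  by_cases hmn : m ≤ n
  · have key : homogeneousComponent ((n - m) + m) (h * g) = homogeneousComponent (n - m) h * g :=
      hc_mul_homog h hg (n - m)
    have hnm : (n - m) + m = n := by omega
    rw [hnm] at key
    have hmem : homogeneousComponent n (h * g) = h * g :=
      homogeneousComponent_of_mem ((mem_homogeneousSubmodule _ _).mpr
        (by rwa [mul_comm] at hgh)) |>.trans (if_pos rfl)
    exact mul_right_cancel₀ hg0 (hmem.symm.trans key)
  · exfalso
    have hall : ∀ j, homogeneousComponent j h = 0 := by
      intro j
      have key : homogeneousComponent (j + m) (h * g) = homogeneousComponent j h * g :=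
        hc_mul_homog h hg j
      have hz : homogeneousComponent (j + m) (h * g) = 0 := by
        rw [homogeneousComponent_of_mem ((mem_homogeneousSubmodule _ _).mpr
          (by rwa [mul_comm] at hgh)), if_neg (by omega)]
      rw [hz] at key
      rcases mul_eq_zero.mp key.symm with h' | h'
      · exact h'
      · exact absurd h' hg0
    apply h0
    conv_lhs => rw [← sum_homogeneousComponent h]
    exact Finset.sum_eq_zero fun k _ => hall k

end Stmt10

namespace Stmt10

variable {l : ℕ}

lemma exists_coord_ne_zero {μ : V l →ₗ[ℝ] ℝ} (h : μ ≠ 0) :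
    ∃ i₀, μ (EuclideanSpace.single i₀ (1:ℝ)) ≠ 0 := by
  by_contra hc
  push_neg at hc
  apply h
  ext x
  rw [lin_sum μ x]
  simp [hc]

lemma X_dvd_of_vanish (i₀ : Fin l) {g : S l}
    (h : ∀ y : Fin l → ℝ, y i₀ = 0 → eval y g = 0) : X i₀ ∣ g := by
  set φ : S l →ₐ[ℝ] S l := aeval (fun j => if j = i₀ then 0 else X j) with hφ
  have c1 : X i₀ ∣ (g - φ g) := by
    clear h
    induction g using MvPolynomial.induction_on with
    | C a => simp [hφ]
    | add p q hp hq =>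
      have : p + q - φ (p + q) = (p - φ p) + (q - φ q) := by rw [map_add]; ring
      rw [this]; exact dvd_add hp hq
    | mul_X p j hp =>
      rw [map_mul, aeval_X]
      by_cases hj : j = i₀
      · subst hj
        rw [if_pos rfl, mul_zero, sub_zero]
        exact dvd_mul_left _ _
      · rw [if_neg hj]
        have : p * X j - φ p * X j = (p - φ p) * X j := by ring
        rw [this]
        exact hp.mul_right _
  have c2 : φ g = 0 := by
    apply MvPolynomial.funext
    intro y
    rw [hφ, eval_aeval']
    rw [map_zero]
    apply h
    simp
  rw [c2, sub_zero] at c1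
  exact c1

/-- A polynomial vanishing on the kernel of a nonzero functional is divisible by it. -/
lemma linPoly_dvd_of_vanish {μ : V l →ₗ[ℝ] ℝ} (hμ : μ ≠ 0) {f : S l}
    (h : ∀ x : V l, μ x = 0 → evalV x f = 0) : linPoly μ ∣ f := by
  obtain ⟨i₀, hc⟩ := exists_coord_ne_zero hμ
  set c := μ (EuclideanSpace.single i₀ (1:ℝ)) with hcdef
  set E : S l := ∑ j' ∈ Finset.univ.erase i₀, C (μ (EuclideanSpace.single j' 1)) * X j' with hE
  set q : Fin l → S l := fun j => if j = i₀ then C (1/c) * (X i₀ - E) else X j with hqdef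
  set u : Fin l → S l := fun j => if j = i₀ then C c * X i₀ + E else X j with hudef
  have hq0 : q i₀ = C (1/c) * (X i₀ - E) := if_pos rfl
  have hqj : ∀ j, j ≠ i₀ → q j = X j := fun j hj => if_neg hj
  have hu0 : u i₀ = C c * X i₀ + E := if_pos rfl
  have huj : ∀ j, j ≠ i₀ → u j = X j := fun j hj => if_neg hj
  have hlin : linPoly μ = C c * X i₀ + E := by
    rw [linPoly, ← Finset.add_sum_erase _ _ (Finset.mem_univ i₀), hE, hcdef]
  have haevalE : aeval u E = E := by
    rw [hE, map_sum]
    refine Finset.sum_congr rfl fun j' hj' => ?_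
    rw [map_mul, aeval_C, aeval_X, huj j' (Finset.mem_erase.mp hj').1, MvPolynomial.algebraMap_eq]
  have comp : ∀ p : S l, aeval u (aeval q p) = p := by
    intro p
    have hcomp : (aeval u).comp (aeval q) = AlgHom.id ℝ (S l) := by
      apply MvPolynomial.algHom_ext
      intro j
      simp only [AlgHom.comp_apply, aeval_X, AlgHom.id_apply]
      by_cases hj : j = i₀
      · subst hj
        rw [hq0, map_mul, map_sub, aeval_X, aeval_C, MvPolynomial.algebraMap_eq, haevalE, hu0,
          add_sub_cancel_right, ← mul_assoc, ← C_mul, one_div_mul_cancel hc, C_1, one_mul]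
      · rw [hqj j hj, aeval_X, huj j hj]
    calc aeval u (aeval q p) = ((aeval u).comp (aeval q)) p := rfl
    _ = p := by rw [hcomp]; rfl
  have hvan : ∀ y : Fin l → ℝ, y i₀ = 0 → eval y (aeval q f) = 0 := by
    intro y hy
    rw [eval_aeval']
    set z : Fin l → ℝ := fun j => eval y (q j) with hz
    have hzj : ∀ j, j ≠ i₀ → z j = y j := by
      intro j hj
      show eval y (q j) = y j
      rw [hqj j hj, eval_X]
    have hzi : z i₀ = (1/c) * (y i₀ - eval y E) := by
      show eval y (q i₀) = _
      rw [hq0, eval_mul, eval_C, eval_sub, eval_X]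
    have hEy : eval y E = ∑ j' ∈ Finset.univ.erase i₀, y j' * μ (EuclideanSpace.single j' 1) := by
      rw [hE, map_sum]
      exact Finset.sum_congr rfl fun j' _ => by rw [eval_mul, eval_C, eval_X, mul_comm]
    have hμz : μ (WithLp.toLp 2 z) = 0 := by
      rw [lin_sum μ (WithLp.toLp 2 z)]
      rw [show ∑ i, ((WithLp.toLp 2 z)) i * μ (EuclideanSpace.single i 1)
          = ∑ i, z i * μ (EuclideanSpace.single i 1) from rfl]
      rw [← Finset.add_sum_erase _ (fun i => z i * μ (EuclideanSpace.single i 1))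
        (Finset.mem_univ i₀)]
      have hsum : ∑ j' ∈ Finset.univ.erase i₀, z j' * μ (EuclideanSpace.single j' 1)
          = ∑ j' ∈ Finset.univ.erase i₀, y j' * μ (EuclideanSpace.single j' 1) :=
        Finset.sum_congr rfl (fun j' hj' => by rw [hzj j' (Finset.mem_erase.mp hj').1])
      rw [hsum, hzi, hy, hEy, ← hcdef]
      field_simp
      ring
    exact h (WithLp.toLp 2 z) hμz
  obtain ⟨g', hg'⟩ := X_dvd_of_vanish i₀ hvan
  refine ⟨aeval u g', ?_⟩
  conv_lhs => rw [← comp f, hg']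
  rw [map_mul, aeval_X, hu0, hlin]

lemma linPoly_dvd_vanish {μ : V l →ₗ[ℝ] ℝ} {f : S l} (h : linPoly μ ∣ f) :
    ∀ x : V l, μ x = 0 → evalV x f = 0 := by
  rintro x hx
  obtain ⟨g, rfl⟩ := h
  rw [evalV, eval_mul]
  rw [show (eval fun i => x i) (linPoly μ) = evalV x (linPoly μ) from rfl, evalV_linPoly, hx,
    zero_mul]

lemma prime_linPoly {μ : V l →ₗ[ℝ] ℝ} (hμ : μ ≠ 0) : Prime (linPoly μ) := by
  obtain ⟨i₀, hc⟩ := exists_coord_ne_zero hμ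
  set c := μ (EuclideanSpace.single i₀ (1:ℝ)) with hcdef
  refine ⟨linPoly_ne_zero hμ, ?_, ?_⟩
  · intro hunit
    obtain ⟨v, hv⟩ := isUnit_iff_exists_inv.mp hunit
    have h2 := congrArg (eval (fun _ => (0:ℝ))) hv
    rw [eval_mul, map_one] at h2
    rw [show (eval fun _ => (0:ℝ)) (linPoly μ) = evalV 0 (linPoly μ) from rfl,
      evalV_linPoly, map_zero, zero_mul] at h2
    exact zero_ne_one h2
  · intro a b hab
    set Pq : Fin l → S l := fun j => if j = i₀ then X i₀ - C (1/c) * linPoly μ else X j with hPq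
    have hPq0 : Pq i₀ = X i₀ - C (1/c) * linPoly μ := if_pos rfl
    have hPqj : ∀ j, j ≠ i₀ → Pq j = X j := fun j hj => if_neg hj
    have hzker : ∀ y : Fin l → ℝ, μ (WithLp.toLp 2 (fun j => eval y (Pq j))) = 0 := by
      intro y
      set z : Fin l → ℝ := fun j => eval y (Pq j) with hz
      rw [lin_sum]
      rw [show ∑ i, ((WithLp.toLp 2 z)) i * μ (EuclideanSpace.single i 1)
          = ∑ i, z i * μ (EuclideanSpace.single i 1) from rfl]
      rw [← Finset.add_sum_erase _ (fun i => z i * μ (EuclideanSpace.single i 1))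
        (Finset.mem_univ i₀)]
      have hzi : z i₀ = y i₀ - (1/c) * μ (WithLp.toLp 2 y) := by
        show eval y (Pq i₀) = _
        rw [hPq0, eval_sub, eval_X, eval_mul, eval_C,
          show (eval y) (linPoly μ) = evalV (WithLp.toLp 2 y) (linPoly μ) from rfl, evalV_linPoly]
      have hzj : ∀ j, j ≠ i₀ → z j = y j := by
        intro j hj
        show eval y (Pq j) = y j
        rw [hPqj j hj, eval_X]
      have hsum : ∑ j' ∈ Finset.univ.erase i₀, z j' * μ (EuclideanSpace.single j' 1)
          = ∑ j' ∈ Finset.univ.erase i₀, y j' * μ (EuclideanSpace.single j' 1) :=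
        Finset.sum_congr rfl (fun j' hj' => by rw [hzj j' (Finset.mem_erase.mp hj').1])
      rw [hzi, hsum]
      have hy : μ (WithLp.toLp 2 y) = y i₀ * c + ∑ j' ∈ Finset.univ.erase i₀,
          y j' * μ (EuclideanSpace.single j' 1) := by
        rw [lin_sum μ (WithLp.toLp 2 y)]
        rw [show ∑ i, ((WithLp.toLp 2 y)) i * μ (EuclideanSpace.single i 1)
            = ∑ i, y i * μ (EuclideanSpace.single i 1) from rfl]
        rw [← Finset.add_sum_erase _ (fun i => y i * μ (EuclideanSpace.single i 1))
          (Finset.mem_univ i₀), ← hcdef]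
      rw [hy, ← hcdef]
      field_simp
      ring
    have hz0 : aeval Pq a * aeval Pq b = 0 := by
      apply MvPolynomial.funext
      intro y
      rw [eval_mul, eval_aeval', eval_aeval', map_zero]
      have h3 := linPoly_dvd_vanish hab (WithLp.toLp 2 (fun j => eval y (Pq j))) (hzker y)
      rw [evalV, eval_mul] at h3
      exact h3
    have hback : ∀ p : S l, aeval Pq p = 0 → linPoly μ ∣ p := by
      intro p h0
      apply linPoly_dvd_of_vanish hμ
      intro x hx
      have key := congrArg (eval (fun j => x j)) h0
      rw [eval_aeval', map_zero] at key
      have hzx : (fun j => eval (fun j' => x j') (Pq j)) = fun j => x j := by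
        funext j
        by_cases hj : j = i₀
        · subst hj
          rw [hPq0, eval_sub, eval_X, eval_mul, eval_C,
            show (eval fun j' => x j') (linPoly μ) = evalV x (linPoly μ) from rfl, evalV_linPoly,
            hx, mul_zero, sub_zero]
        · rw [hPqj j hj, eval_X]
      rw [hzx] at key
      exact key
    rcases mul_eq_zero.mp hz0 with h0 | h0
    · exact Or.inl (hback a h0)
    · exact Or.inr (hback b h0)

lemma linPoly_dvd_linPoly {μ ν : V l →ₗ[ℝ] ℝ} (hμ : μ ≠ 0) (h : linPoly μ ∣ linPoly ν) :
    ∃ t : ℝ, ν = t • μ := by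
  obtain ⟨i₀, hc⟩ := exists_coord_ne_zero hμ
  set c := μ (EuclideanSpace.single i₀ (1:ℝ)) with hcdef
  refine ⟨ν (EuclideanSpace.single i₀ 1) / c, ?_⟩
  ext x
  have hker : μ (x - (μ x / c) • EuclideanSpace.single i₀ 1) = 0 := by
    rw [map_sub, map_smul]
    simp only [smul_eq_mul, ← hcdef]
    field_simp
    ring
  have h4 := linPoly_dvd_vanish h _ hker
  rw [evalV_linPoly, map_sub, map_smul] at h4
  simp only [smul_eq_mul] at h4
  have hνx : ν x = μ x / c * ν (EuclideanSpace.single i₀ 1) := by linarith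
  rw [hνx]
  simp only [LinearMap.smul_apply, smul_eq_mul]
  ring

end Stmt10

namespace Stmt10

variable {l : ℕ} (St : Setting l)

lemma dualVec_inner (μ : V l →ₗ[ℝ] ℝ) (x : V l) : (inner ℝ (dualVec μ) x : ℝ) = μ x := by
  rw [dualVec, InnerProductSpace.toDual_symm_apply]
  rfl

lemma denom_ne_zero {μ : V l →ₗ[ℝ] ℝ} (hμ : μ ≠ 0) : μ (dualVec μ) ≠ 0 := by
  rw [← dualVec_inner]
  rw [show (inner ℝ (dualVec μ) (dualVec μ) : ℝ) = ‖dualVec μ‖^2 from real_inner_self_eq_norm_sq _]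
  intro h
  have hd : dualVec μ = 0 := by
    have := sq_eq_zero_iff.mp h
    simpa using this
  apply hμ
  ext x
  rw [← dualVec_inner, hd, inner_zero_left]
  simp

lemma mu_reflKer {μ : V l →ₗ[ℝ] ℝ} (hμ : μ ≠ 0) (x : V l) :
    μ (reflKer μ x) = -(μ x) := by
  rw [reflKer, map_sub, map_smul, smul_eq_mul]
  field_simp [denom_ne_zero hμ]
  ring

lemma reflKer_fix {μ : V l →ₗ[ℝ] ℝ} {x : V l} (hx : μ x = 0) : reflKer μ x = x := by
  rw [reflKer, hx, mul_zero, zero_div, zero_smul, sub_zero]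

lemma reflKer_invol {μ : V l →ₗ[ℝ] ℝ} (hμ : μ ≠ 0) (x : V l) :
    reflKer μ (reflKer μ x) = x := by
  have h1 : μ (reflKer μ x) = -(μ x) := mu_reflKer hμ x
  rw [reflKer, h1]
  rw [show reflKer μ x = x - (2 * μ x / μ (dualVec μ)) • dualVec μ from rfl]
  have : 2 * -μ x / μ (dualVec μ) = -(2 * μ x / μ (dualVec μ)) := by ring
  rw [this, neg_smul, sub_neg_eq_add, sub_add_cancel]

lemma s_invol {α : V l →ₗ[ℝ] ℝ} (hα : α ∈ St.roots) (x : V l) :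
    St.s α (St.s α x) = x := by
  rw [St.s_apply α hα, St.s_apply α hα]
  exact reflKer_invol (St.roots_ne_zero α hα) x

lemma s_symm_apply {α : V l →ₗ[ℝ] ℝ} (hα : α ∈ St.roots) (x : V l) :
    (St.s α).symm x = St.s α x := by
  conv_lhs => rw [← s_invol St hα x]
  exact (St.s α).symm_apply_apply _

lemma s_fix {α : V l →ₗ[ℝ] ℝ} (hα : α ∈ St.roots) {x : V l} (hx : α x = 0) :
    St.s α x = x := by
  rw [St.s_apply α hα]
  exact reflKer_fix hx

/-- The pullback of a functional along `w`. -/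
def tauL (w : V l ≃ₗᵢ[ℝ] V l) (α : V l →ₗ[ℝ] ℝ) : V l →ₗ[ℝ] ℝ :=
  α ∘ₗ w.symm.toLinearEquiv.toLinearMap

lemma tauL_apply (w : V l ≃ₗᵢ[ℝ] V l) (α : V l →ₗ[ℝ] ℝ) (x : V l) :
    tauL w α x = α (w.symm x) := rfl

lemma tauL_inj {w : V l ≃ₗᵢ[ℝ] V l} {α β : V l →ₗ[ℝ] ℝ}
    (h : tauL w α = tauL w β) : α = β := by
  ext x
  have := congrArg (fun μ => μ (w x)) h
  simpa [tauL_apply] using this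

lemma tauL_neg (w : V l ≃ₗᵢ[ℝ] V l) (α : V l →ₗ[ℝ] ℝ) : tauL w (-α) = -tauL w α := by
  ext x; simp [tauL_apply]

lemma polyAct_linPoly' (w : V l ≃ₗᵢ[ℝ] V l) (α : V l →ₗ[ℝ] ℝ) :
    polyAct w (linPoly α) = linPoly (tauL w α) := polyAct_linPoly w α

lemma dPoly_ne_zero : dPoly St ≠ 0 := by
  rw [dPoly]
  apply Finset.prod_ne_zero_iff.mpr
  intro α hα
  exact linPoly_ne_zero (St.roots_ne_zero α (St.pos_subset hα))

lemma dPoly_isHomogeneous : (dPoly St).IsHomogeneous St.pos.card := by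
  rw [dPoly, Finset.card_eq_sum_ones]
  exact IsHomogeneous.prod _ _ _ (fun α _ => linPoly_isHomogeneous α)

/-- Any `w ∈ W` acts on `d` by a sign. -/
lemma act_dPoly_sign {w : V l ≃ₗᵢ[ℝ] V l} (hw : w ∈ St.W) :
    ∃ e : ℝ, (e = 1 ∨ e = -1) ∧ polyAct w (dPoly St) = C e * dPoly St := by
  classical
  set τ := tauL w with hτ
  set σ : (V l →ₗ[ℝ] ℝ) → (V l →ₗ[ℝ] ℝ) := fun α => if τ α ∈ St.pos then τ α else -τ α with hσ
  set η : (V l →ₗ[ℝ] ℝ) → ℝ := fun α => if τ α ∈ St.pos then 1 else -1 with hη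
  have hτroots : ∀ α ∈ St.pos, τ α ∈ St.roots := fun α hα =>
    St.roots_W_invariant α (St.pos_subset hα) w hw
  have hmem : ∀ α ∈ St.pos, σ α ∈ St.pos := by
    intro α hα
    by_cases h : τ α ∈ St.pos
    · rw [hσ]; simpa [h] using h
    · have := St.pos_cover (τ α) (hτroots α hα)
      rcases this with h' | h'
      · exact absurd h' h
      · rw [hσ]; simpa [h] using h'
  have hsign : ∀ α ∈ St.pos, linPoly (τ α) = C (η α) * linPoly (σ α) := by
    intro α hα
    by_cases h : τ α ∈ St.pos
    · rw [hσ, hη]; simp [h]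
    · rw [hσ, hη]
      simp only [if_neg h]
      rw [linPoly_neg, map_neg, C_1, neg_mul, one_mul, neg_neg]
  have hinj : Set.InjOn σ St.pos := by
    intro α hα β hβ hαβ
    rw [hσ] at hαβ
    simp only at hαβ
    by_cases h1 : τ α ∈ St.pos <;> by_cases h2 : τ β ∈ St.pos
    · rw [if_pos h1, if_pos h2] at hαβ; exact tauL_inj hαβ
    · rw [if_pos h1, if_neg h2] at hαβ
      rw [show -τ β = τ (-β) from (tauL_neg w β).symm] at hαβ
      have hββ : α = -β := tauL_inj hαβ
      exfalso
      exact St.pos_disjoint β hβ (by rw [← hββ]; exact hα)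
    · rw [if_neg h1, if_pos h2] at hαβ
      rw [show -τ α = τ (-α) from (tauL_neg w α).symm] at hαβ
      have hββ : -α = β := tauL_inj hαβ
      exfalso
      exact St.pos_disjoint α hα (by rw [hββ]; exact hβ)
    · rw [if_neg h1, if_neg h2] at hαβ
      exact tauL_inj (neg_injective hαβ)
  have hsurj : Set.SurjOn σ St.pos St.pos := by
    have := Finset.surj_on_of_inj_on_of_card_le (fun a (_ : a ∈ St.pos) => σ a)
      (fun a ha => hmem a ha) (fun a₁ a₂ h1 h2 he => hinj h1 h2 he) le_rfl
    intro b hb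
    obtain ⟨a, ha, hab⟩ := this b hb
    exact ⟨a, ha, hab.symm⟩
  have hprod : polyAct w (dPoly St) = (∏ α ∈ St.pos, C (η α)) * ∏ α ∈ St.pos, linPoly (σ α) := by
    rw [dPoly, map_prod]
    rw [Finset.prod_congr rfl (fun α hα => by rw [polyAct_linPoly', ← hτ, hsign α hα])]
    rw [Finset.prod_mul_distrib]
  have hre : ∏ α ∈ St.pos, linPoly (σ α) = dPoly St := by
    rw [dPoly]
    exact Finset.prod_nbij σ (fun a ha => hmem a ha) hinj hsurj (fun a _ => rfl)
  have hC : ∏ α ∈ St.pos, C (η α) = C (∏ α ∈ St.pos, η α) :=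
    (map_prod (C : ℝ →+* S l) η St.pos).symm
  refine ⟨∏ α ∈ St.pos, η α, ?_, by rw [hprod, hre, hC]⟩
  have hsq : (∏ α ∈ St.pos, η α) * (∏ α ∈ St.pos, η α) = 1 := by
    rw [← Finset.prod_mul_distrib]
    apply Finset.prod_eq_one
    intro α _
    rw [hη]
    by_cases h : τ α ∈ St.pos <;> simp [h]
  exact mul_self_eq_one_iff.mp hsq

/-- The sign character of `W`. -/
def eps (w : V l ≃ₗᵢ[ℝ] V l) : ℝ := if polyAct w (dPoly St) = dPoly St then 1 else -1

lemma act_dPoly {w : V l ≃ₗᵢ[ℝ] V l} (hw : w ∈ St.W) :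
    polyAct w (dPoly St) = C (eps St w) * dPoly St := by
  obtain ⟨e, he, hact⟩ := act_dPoly_sign St hw
  rcases he with he | he
  · rw [he, C_1, one_mul] at hact
    rw [eps, if_pos hact, C_1, one_mul, hact]
  · rw [he] at hact
    have hne : polyAct w (dPoly St) ≠ dPoly St := by
      rw [hact]
      intro h
      have : (C (-1 : ℝ) - 1) * dPoly St = 0 := by
        rw [sub_mul, one_mul, h, sub_self]
      rcases mul_eq_zero.mp this with h' | h'
      · have := congrArg constantCoeff h'
        simp at this
        norm_num at this
      · exact dPoly_ne_zero St h'
    rw [eps, if_neg hne, hact]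

lemma eps_sq (w : V l ≃ₗᵢ[ℝ] V l) : eps St w * eps St w = 1 := by
  rw [eps]
  by_cases h : polyAct w (dPoly St) = dPoly St <;> simp [h]

lemma eps_one : eps St 1 = 1 := by
  rw [eps, if_pos (polyAct_one _)]

lemma eps_mul {u v : V l ≃ₗᵢ[ℝ] V l} (hu : u ∈ St.W) (hv : v ∈ St.W) :
    eps St (u * v) = eps St u * eps St v := by
  have h1 : polyAct (u * v) (dPoly St) = C (eps St (u * v)) * dPoly St :=
    act_dPoly St (mul_mem hu hv)
  have h2 : polyAct (u * v) (dPoly St) = C (eps St u * eps St v) * dPoly St := by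
    rw [polyAct_mul, act_dPoly St hv, map_mul, act_dPoly St hu]
    rw [show polyAct u (C (eps St v)) = C (eps St v) from by
      rw [show (C (eps St v) : S l) = algebraMap ℝ (S l) (eps St v) from rfl]; exact
        AlgHom.commutes _ _]
    rw [C_mul]
    ring
  have := h1.symm.trans h2
  have hC : C (eps St (u * v)) = C (eps St u * eps St v) :=
    mul_right_cancel₀ (dPoly_ne_zero St) this
  exact C_injective _ _ hC

lemma eps_inv {w : V l ≃ₗᵢ[ℝ] V l} (hw : w ∈ St.W) : eps St w⁻¹ = eps St w := by
  have h1 : eps St w⁻¹ * eps St w = 1 := by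
    rw [← eps_mul St (inv_mem hw) hw, inv_mul_cancel, eps_one]
  have h2 := eps_sq St w
  rcases mul_self_eq_one_iff.mp h2 with h | h <;> rw [h] at h1 ⊢ <;> linarith

/-- `ε(s_α) = -1` for positive roots `α`. -/
lemma eps_s {α : V l →ₗ[ℝ] ℝ} (hα : α ∈ St.pos) : eps St (St.s α) = -1 := by
  have hαr : α ∈ St.roots := St.pos_subset hα
  have hα0 : α ≠ 0 := St.roots_ne_zero α hαr
  have hsW : St.s α ∈ St.W := St.s_mem α hαr
  have htau : tauL (St.s α) α = -α := by
    ext x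
    rw [tauL_apply, s_symm_apply St hαr, St.s_apply α hαr, mu_reflKer hα0]
    rfl
  set e : S l := ∏ β ∈ St.pos.erase α, linPoly β with he
  have hd : dPoly St = linPoly α * e := by
    rw [dPoly, he, Finset.mul_prod_erase _ _ hα]
  rcases mul_self_eq_one_iff.mp (eps_sq St (St.s α)) with h1 | h1
  · exfalso
    have hact := act_dPoly St hsW
    rw [h1, C_1, one_mul] at hact
    rw [hd, map_mul, polyAct_linPoly', htau, linPoly_neg] at hact
    have hse : polyAct (St.s α) e = -e := by
      have h3 : linPoly α * (-(polyAct (St.s α) e)) = linPoly α * e := by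
        rw [mul_neg, ← neg_mul]; exact hact
      have h4 := mul_left_cancel₀ (linPoly_ne_zero hα0) h3
      rw [← neg_neg ((polyAct (St.s α)) e), h4]
    -- e vanishes on ker α
    have hvan : ∀ x : V l, α x = 0 → evalV x e = 0 := by
      intro x hx
      have h2 : evalV x (polyAct (St.s α) e) = evalV x e := by
        rw [evalV_polyAct, s_symm_apply St hαr, s_fix St hαr hx]
      rw [hse] at h2
      rw [evalV, eval_neg] at h2
      have : (eval fun i => x i) e = evalV x e := rfl
      rw [this] at h2
      linarith
    have hdvd : linPoly α ∣ e := linPoly_dvd_of_vanish hα0 hvan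
    rw [he] at hdvd
    obtain ⟨β, hβer, hβdvd⟩ := (prime_linPoly hα0).exists_mem_finset_dvd hdvd
    obtain ⟨t, ht⟩ := linPoly_dvd_linPoly hα0 hβdvd
    have hβr : β ∈ St.roots := St.pos_subset (Finset.mem_erase.mp hβer).2
    have := St.roots_reduced α hαr t (by rw [← ht]; exact hβr)
    rcases this with h' | h'
    · rw [h', one_smul] at ht
      exact (Finset.mem_erase.mp hβer).1 ht
    · rw [h'] at ht
      rw [show ((-1:ℝ) • α) = -α from by ext; simp] at ht
      exact St.pos_disjoint α hα (by rw [← ht]; exact (Finset.mem_erase.mp hβer).2)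
  · exact h1

end Stmt10

namespace Stmt10

variable {l : ℕ} (St : Setting l)

/-- `W` as a finset. -/
def Wfin : Finset (V l ≃ₗᵢ[ℝ] V l) := St.W_finite.toFinset

lemma mem_Wfin {w : V l ≃ₗᵢ[ℝ] V l} : w ∈ Wfin St ↔ w ∈ St.W := Set.Finite.mem_toFinset _

lemma one_mem_Wfin : (1 : V l ≃ₗᵢ[ℝ] V l) ∈ Wfin St := (mem_Wfin St).mpr (one_mem _)

/-- The skew-symmetrization operator. -/
def AltOp (f : S l) : S l := ∑ w ∈ Wfin St, eps St w • polyAct w f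

lemma AltOp_add (f g : S l) : AltOp St (f + g) = AltOp St f + AltOp St g := by
  rw [AltOp, AltOp, AltOp, ← Finset.sum_add_distrib]
  exact Finset.sum_congr rfl fun w _ => by rw [map_add, smul_add]

lemma AltOp_smul (c : ℝ) (f : S l) : AltOp St (c • f) = c • AltOp St f := by
  rw [AltOp, AltOp, Finset.smul_sum]
  exact Finset.sum_congr rfl fun w _ => by
    rw [map_smul, smul_comm]

lemma AltOp_sub (f g : S l) : AltOp St (f - g) = AltOp St f - AltOp St g := by
  rw [AltOp, AltOp, AltOp, ← Finset.sum_sub_distrib]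
  exact Finset.sum_congr rfl fun w _ => by rw [map_sub, smul_sub]

lemma polyAct_AltOp {u : V l ≃ₗᵢ[ℝ] V l} (hu : u ∈ St.W) (f : S l) :
    polyAct u (AltOp St f) = eps St u • AltOp St f := by
  rw [AltOp, map_sum]
  have step1 : ∀ w ∈ Wfin St,
      polyAct u (eps St w • polyAct w f) = eps St w • polyAct (u * w) f := by
    intro w _
    rw [map_smul, polyAct_mul]
  rw [Finset.sum_congr rfl step1]
  have step2 : ∑ w ∈ Wfin St, eps St w • polyAct (u * w) f
      = ∑ t ∈ Wfin St, (eps St u * eps St t) • polyAct t f := by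
    apply Finset.sum_nbij' (fun w => u * w) (fun t => u⁻¹ * t)
    · intro a ha
      exact (mem_Wfin St).mpr (mul_mem hu ((mem_Wfin St).mp ha))
    · intro a ha
      exact (mem_Wfin St).mpr (mul_mem (inv_mem hu) ((mem_Wfin St).mp ha))
    · intro a _; group
    · intro a _; group
    · intro a ha
      congr 1
      have haW : a ∈ St.W := (mem_Wfin St).mp ha
      rw [eps_mul St hu haW, ← mul_assoc, eps_sq St u, one_mul]
  rw [step2]
  rw [Finset.smul_sum]
  exact Finset.sum_congr rfl fun t _ => by rw [smul_smul]

lemma AltOp_polyAct {u : V l ≃ₗᵢ[ℝ] V l} (hu : u ∈ St.W) (f : S l) :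
    AltOp St (polyAct u f) = eps St u • AltOp St f := by
  simp only [AltOp]
  rw [Finset.smul_sum]
  have step1 : ∀ w ∈ Wfin St,
      eps St w • polyAct w (polyAct u f) = eps St w • polyAct (w * u) f := by
    intro w _
    rw [polyAct_mul]
  rw [Finset.sum_congr rfl step1]
  have step2 : ∑ w ∈ Wfin St, eps St w • polyAct (w * u) f
      = ∑ t ∈ Wfin St, (eps St u * eps St t) • polyAct t f := by
    apply Finset.sum_nbij' (fun w => w * u) (fun t => t * u⁻¹)
    · intro a ha
      exact (mem_Wfin St).mpr (mul_mem ((mem_Wfin St).mp ha) hu)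
    · intro a ha
      exact (mem_Wfin St).mpr (mul_mem ((mem_Wfin St).mp ha) (inv_mem hu))
    · intro a _; group
    · intro a _; group
    · intro a ha
      congr 1
      have haW : a ∈ St.W := (mem_Wfin St).mp ha
      rw [eps_mul St haW hu]
      have h2 : eps St u * (eps St a * eps St u) = (eps St u * eps St u) * eps St a := by ring
      rw [h2, eps_sq St u, one_mul]
  rw [step2]
  exact Finset.sum_congr rfl fun t _ => by rw [smul_smul]

lemma AltOp_mul_invariant {m : S l} (hm : ∀ w ∈ St.W, polyAct w m = m) (p : S l) :
    AltOp St (p * m) = AltOp St p * m := by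
  rw [AltOp, AltOp, Finset.sum_mul]
  exact Finset.sum_congr rfl fun w hw => by
    rw [map_mul, hm w ((mem_Wfin St).mp hw), smul_mul_assoc]

lemma AltOp_dPoly : AltOp St (dPoly St) = ((Wfin St).card : ℝ) • dPoly St := by
  rw [AltOp]
  have : ∀ w ∈ Wfin St, eps St w • polyAct w (dPoly St) = dPoly St := by
    intro w hw
    rw [act_dPoly St ((mem_Wfin St).mp hw), ← smul_eq_C_mul, smul_smul, eps_sq, one_smul]
  rw [Finset.sum_congr rfl this, Finset.sum_const, Nat.cast_smul_eq_nsmul]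

lemma skew_dvd {F : S l} (hskew : ∀ α ∈ St.pos, polyAct (St.s α) F = -F) :
    dPoly St ∣ F := by
  have hdvd : ∀ α ∈ St.pos, linPoly α ∣ F := by
    intro α hα
    have hαr := St.pos_subset hα
    apply linPoly_dvd_of_vanish (St.roots_ne_zero α hαr)
    intro x hx
    have h2 : evalV x (polyAct (St.s α) F) = evalV x F := by
      rw [evalV_polyAct, s_symm_apply St hαr, s_fix St hαr hx]
    rw [hskew α hα, evalV, eval_neg] at h2
    have : (eval fun i => x i) F = evalV x F := rfl
    rw [this] at h2
    linarith
  -- product of the pairwise non-associate primes divides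
  have claim : ∀ s : Finset (V l →ₗ[ℝ] ℝ), s ⊆ St.pos → (∏ α ∈ s, linPoly α) ∣ F := by
    intro s
    induction s using Finset.induction_on with
    | empty => intro _; simp
    | insert a s ha ih =>
      intro hsub
      have haP : a ∈ St.pos := hsub (Finset.mem_insert_self a s)
      have ha0 : a ≠ 0 := St.roots_ne_zero a (St.pos_subset haP)
      obtain ⟨G, hG⟩ := ih (fun x hx => hsub (Finset.mem_insert_of_mem hx))
      have hpa : Prime (linPoly a) := prime_linPoly ha0
      have : linPoly a ∣ (∏ α ∈ s, linPoly α) * G := by rw [← hG]; exact hdvd a haP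
      rcases hpa.dvd_or_dvd this with h' | h'
      · exfalso
        obtain ⟨β, hβs, hβdvd⟩ := hpa.exists_mem_finset_dvd h'
        obtain ⟨t, ht⟩ := linPoly_dvd_linPoly ha0 hβdvd
        have hβr : β ∈ St.roots := St.pos_subset (hsub (Finset.mem_insert_of_mem hβs))
        rcases St.roots_reduced a (St.pos_subset haP) t (by rw [← ht]; exact hβr) with h1 | h1
        · rw [h1, one_smul] at ht
          rw [ht] at hβs
          exact ha hβs
        · rw [h1, show ((-1:ℝ) • a) = -a from by ext; simp] at ht
          exact St.pos_disjoint a haP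
            (by rw [← ht]; exact hsub (Finset.mem_insert_of_mem hβs))
      · obtain ⟨G', hG'⟩ := h'
        refine ⟨G', ?_⟩
        rw [Finset.prod_insert ha, hG, hG']
        ring
  have := claim St.pos (subset_refl _)
  rwa [dPoly]

lemma AltOp_skew (f : S l) {α : V l →ₗ[ℝ] ℝ} (hα : α ∈ St.pos) :
    polyAct (St.s α) (AltOp St f) = -(AltOp St f) := by
  rw [polyAct_AltOp St (St.s_mem α (St.pos_subset hα)), eps_s St hα, neg_smul, one_smul]

lemma dPoly_dvd_AltOp (f : S l) : dPoly St ∣ AltOp St f :=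
  skew_dvd St (fun α hα => AltOp_skew St f hα)

/-- constant coefficient is `polyAct`-invariant -/
lemma evalV_zero (p : S l) : evalV 0 p = constantCoeff p := by
  rw [evalV, show (fun i => (0 : V l) i) = (0 : Fin l → ℝ) from rfl, eval_zero]

lemma cc_polyAct (w : V l ≃ₗᵢ[ℝ] V l) (f : S l) :
    constantCoeff (polyAct w f) = constantCoeff f := by
  rw [← evalV_zero, ← evalV_zero, evalV_polyAct, map_zero]

lemma IW_stable {w : V l ≃ₗᵢ[ℝ] V l} (hw : w ∈ St.W) {f : S l} (hf : f ∈ IW St) :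
    polyAct w f ∈ IW St := by
  rw [IW] at hf ⊢
  refine Submodule.span_induction ?_ ?_ ?_ ?_ hf
  · intro m hm
    apply Ideal.subset_span
    obtain ⟨hinv, hcc⟩ := hm
    constructor
    · intro u hu
      rw [← polyAct_mul, hinv (u * w) (mul_mem hu hw)]
      exact (hinv w hw).symm
    · rw [cc_polyAct]; exact hcc
  · rw [map_zero]; exact zero_mem _
  · intro x y _ _ hx hy
    rw [map_add]; exact add_mem hx hy
  · intro a x _ hx
    rw [show a • x = a * x from rfl, map_mul]
    exact Ideal.mul_mem_left _ _ hx

lemma hc_homog_cc {m : S l} {j : ℕ} (hj : 1 ≤ j) (hm : m.IsHomogeneous j) :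
    constantCoeff m = 0 := by
  rw [show (constantCoeff : MvPolynomial (Fin l) ℝ →+* ℝ) m = coeff 0 m from rfl]
  have hdeg : (0 : Fin l →₀ ℕ).degree = 0 := by simp [Finsupp.degree]
  exact hm.coeff_eq_zero (by rw [hdeg]; omega)

lemma hc_mem_gen {m : S l} (hm : (∀ w ∈ St.W, polyAct w m = m) ∧ constantCoeff m = 0)
    (j : ℕ) : homogeneousComponent j m ∈ IW St := by
  by_cases hj : j = 0
  · subst hj
    rw [homogeneousComponent_zero, show coeff 0 m = constantCoeff m from rfl, hm.2, map_zero]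
    exact zero_mem _
  · apply Ideal.subset_span
    constructor
    · intro w hw
      rw [← hc_polyAct, hm.1 w hw]
    · exact hc_homog_cc (by omega) (homogeneousComponent_isHomogeneous j m)

lemma hc_mul_homog' (p : S l) {g : S l} {j : ℕ} (hg : g.IsHomogeneous j) (n : ℕ) :
    homogeneousComponent n (p * g) =
      if j ≤ n then homogeneousComponent (n - j) p * g else 0 := by
  by_cases h : j ≤ n
  · rw [if_pos h]
    have heq : n = (n - j) + j := by omega
    conv_lhs => rw [heq]
    rw [hc_mul_homog p hg]
  · rw [if_neg h]
    conv_lhs => rw [← sum_homogeneousComponent p, Finset.sum_mul, map_sum]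
    apply Finset.sum_eq_zero
    intro k _
    have hk : (homogeneousComponent k p * g).IsHomogeneous (k + j) :=
      (homogeneousComponent_isHomogeneous k p).mul hg
    rw [homogeneousComponent_of_mem ((mem_homogeneousSubmodule _ _).mpr hk), if_neg (by omega)]

/-- `I_W` is a graded ideal. -/
lemma IW_graded {f : S l} (hf : f ∈ IW St) (n : ℕ) :
    homogeneousComponent n f ∈ IW St := by
  rw [IW] at hf
  have hf' : f ∈ Submodule.span (S l)
      {f : S l | (∀ w ∈ St.W, polyAct w f = f) ∧ constantCoeff f = 0} := hf
  obtain ⟨c, hsupp, hsum⟩ := Submodule.mem_span_set.mp hf'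
  rw [← hsum]
  rw [Finsupp.sum]
  rw [map_sum]
  apply Submodule.sum_mem
  intro m hmsup
  have hm := hsupp hmsup
  -- expand m into homogeneous components
  have hexp : (c m) • m = ∑ j ∈ Finset.range (m.totalDegree + 1),
      c m * homogeneousComponent j m := by
    rw [smul_eq_mul, ← Finset.mul_sum, sum_homogeneousComponent]
  rw [hexp, map_sum]
  apply Submodule.sum_mem
  intro j _
  rw [hc_mul_homog' (c m) (homogeneousComponent_isHomogeneous j m) n]
  by_cases h : j ≤ n
  · rw [if_pos h]
    exact Ideal.mul_mem_left _ _ (hc_mem_gen St hm j)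
  · rw [if_neg h]
    exact zero_mem _

lemma AltOp_zero : AltOp St (0 : S l) = 0 := by
  simp [AltOp]

lemma AltOp_finsum {ι : Type*} (s : Finset ι) (F : ι → S l) :
    AltOp St (∑ i ∈ s, F i) = ∑ i ∈ s, AltOp St (F i) := by
  induction s using Finset.induction_on with
  | empty => simpa using AltOp_zero St
  | insert a s h ih =>
    rw [Finset.sum_insert h, Finset.sum_insert h, AltOp_add, ih]

/-- The master lemma: `d ∉ I_W`. -/
lemma dPoly_not_mem_IW : dPoly St ∉ IW St := by
  intro hd
  rw [IW] at hd
  have hf' : dPoly St ∈ Submodule.span (S l)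
      {f : S l | (∀ w ∈ St.W, polyAct w f = f) ∧ constantCoeff f = 0} := hd
  obtain ⟨c, hsupp, hsum⟩ := Submodule.mem_span_set.mp hf'
  have halt : AltOp St (dPoly St) = ∑ m ∈ c.support, AltOp St (c m) * m := by
    rw [← hsum, Finsupp.sum, AltOp_finsum]
    exact Finset.sum_congr rfl fun m hm => by
      rw [smul_eq_mul, AltOp_mul_invariant St (hsupp hm).1]
  -- each AltOp (c m) is divisible by d
  have hdvd : ∀ m, dPoly St ∣ AltOp St (c m) := fun m => dPoly_dvd_AltOp St (c m)
  set r : S l → S l := fun m => (hdvd m).choose with hr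
  have hrspec : ∀ m, AltOp St (c m) = dPoly St * r m := fun m => (hdvd m).choose_spec
  have key : dPoly St * C ((Wfin St).card : ℝ) = dPoly St * ∑ m ∈ c.support, r m * m := by
    rw [Finset.mul_sum]
    have h1 : ∀ m ∈ c.support, dPoly St * (r m * m) = AltOp St (c m) * m := by
      intro m _
      rw [hrspec m]; ring
    rw [Finset.sum_congr rfl h1, ← halt, AltOp_dPoly, smul_eq_C_mul, mul_comm]
  have key2 : C ((Wfin St).card : ℝ) = ∑ m ∈ c.support, r m * m :=
    mul_left_cancel₀ (dPoly_ne_zero St) key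
  have hccsum := congrArg constantCoeff key2
  rw [constantCoeff_C, map_sum] at hccsum
  have hall0 : ∀ m ∈ c.support, constantCoeff (r m * m) = 0 := by
    intro m hm
    rw [map_mul, (hsupp hm).2, mul_zero]
  rw [Finset.sum_congr rfl hall0, Finset.sum_const, smul_zero] at hccsum
  have hcard : (Wfin St).card ≠ 0 := Finset.card_ne_zero_of_mem (one_mem_Wfin St)
  exact hcard (by exact_mod_cast hccsum)

end Stmt10

namespace Stmt10

variable {l : ℕ} (St : Setting l)

lemma polyAct_C (w : V l ≃ₗᵢ[ℝ] V l) (c : ℝ) : polyAct w (C c : S l) = C c := by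
  have := (polyAct w).commutes c
  rwa [show algebraMap ℝ (S l) c = C c from rfl] at this

lemma AltOp_homog {g : S l} {n : ℕ} (hg : g.IsHomogeneous n) :
    (AltOp St g).IsHomogeneous n := by
  rw [AltOp]
  apply IsHomogeneous.sum
  intro w _
  rw [smul_eq_C_mul]
  simpa using (isHomogeneous_C (Fin l) (eps St w)).mul (polyAct_isHomogeneous w hg)

lemma skw_exists (g : S l) :
    ∃ t : ℝ, AltOp St (homogeneousComponent St.pos.card g) = C t * dPoly St := by
  obtain ⟨r, hr⟩ := dPoly_dvd_AltOp St (homogeneousComponent St.pos.card g)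
  by_cases h0 : AltOp St (homogeneousComponent St.pos.card g) = 0
  · exact ⟨0, by rw [h0, C_0, zero_mul]⟩
  · have hhom : (AltOp St (homogeneousComponent St.pos.card g)).IsHomogeneous St.pos.card :=
      AltOp_homog St (homogeneousComponent_isHomogeneous _ g)
    have hfac : r = homogeneousComponent (St.pos.card - St.pos.card) r :=
      homog_of_factor (dPoly_isHomogeneous St) (dPoly_ne_zero St) (by rw [← hr]; exact hhom)
    rw [Nat.sub_self, homogeneousComponent_zero] at hfac
    refine ⟨coeff 0 r, ?_⟩
    rw [hr]
    conv_lhs => rw [hfac]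
    ring

/-- A monomial where `d` has a nonzero coefficient. -/
def dIdx : Fin l →₀ ℕ := (MvPolynomial.ne_zero_iff.mp (dPoly_ne_zero St)).choose

lemma dIdx_spec : coeff (dIdx St) (dPoly St) ≠ 0 :=
  (MvPolynomial.ne_zero_iff.mp (dPoly_ne_zero St)).choose_spec

/-- The `d`-coefficient functional `Φ`. -/
def Phi (g : S l) : ℝ :=
  coeff (dIdx St) (AltOp St (homogeneousComponent St.pos.card g)) / coeff (dIdx St) (dPoly St)

lemma Phi_eq_of {g : S l} {t : ℝ}
    (h : AltOp St (homogeneousComponent St.pos.card g) = C t * dPoly St) : Phi St g = t := by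
  rw [Phi, h, coeff_C_mul, mul_div_assoc, div_self (dIdx_spec St), mul_one]

lemma Phi_spec (g : S l) :
    AltOp St (homogeneousComponent St.pos.card g) = C (Phi St g) * dPoly St := by
  obtain ⟨t, ht⟩ := skw_exists St g
  rw [Phi_eq_of St ht, ht]

lemma Phi_add (f g : S l) : Phi St (f + g) = Phi St f + Phi St g := by
  rw [Phi, Phi, Phi, map_add, AltOp_add, coeff_add, add_div]

lemma Phi_sub (f g : S l) : Phi St (f - g) = Phi St f - Phi St g := by
  rw [Phi, Phi, Phi, map_sub, AltOp_sub, coeff_sub, sub_div]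

lemma Phi_smul (c : ℝ) (f : S l) : Phi St (c • f) = c * Phi St f := by
  rw [Phi, Phi, map_smul, AltOp_smul, coeff_smul, smul_eq_mul, mul_div_assoc]

lemma Phi_dPoly : Phi St (dPoly St) = ((Wfin St).card : ℝ) := by
  apply Phi_eq_of
  rw [homogeneousComponent_of_mem ((mem_homogeneousSubmodule _ _).mpr (dPoly_isHomogeneous St)),
    if_pos rfl, AltOp_dPoly, smul_eq_C_mul]

lemma Phi_IW {g : S l} (hg : g ∈ IW St) : Phi St g = 0 := by
  have h1 : homogeneousComponent St.pos.card g ∈ IW St := IW_graded St hg _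
  have h2 : AltOp St (homogeneousComponent St.pos.card g) ∈ IW St := by
    rw [AltOp]
    apply Submodule.sum_mem
    intro w hw
    rw [smul_eq_C_mul]
    exact Ideal.mul_mem_left _ _ (IW_stable St ((mem_Wfin St).mp hw) h1)
  rw [Phi_spec St g] at h2
  by_contra hne
  apply dPoly_not_mem_IW St
  have : dPoly St = C (Phi St g)⁻¹ * (C (Phi St g) * dPoly St) := by
    rw [← mul_assoc, ← C_mul, inv_mul_cancel₀ hne, C_1, one_mul]
  rw [this]
  exact Ideal.mul_mem_left _ _ h2

lemma Phi_polyAct_s {α : V l →ₗ[ℝ] ℝ} (hα : α ∈ St.pos) (h : S l) :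
    Phi St (polyAct (St.s α) h) = -Phi St h := by
  apply Phi_eq_of
  rw [hc_polyAct, AltOp_polyAct St (St.s_mem α (St.pos_subset hα)), eps_s St hα, Phi_spec St h]
  rw [smul_eq_C_mul, ← mul_assoc, ← C_mul]
  norm_num

lemma Phi_mul_deg_N {g : S l} (hg : g.IsHomogeneous St.pos.card) (p : S l) :
    Phi St (p * g) = constantCoeff p * Phi St g := by
  apply Phi_eq_of
  have h1 : homogeneousComponent St.pos.card (p * g) = C (constantCoeff p) * g := by
    rw [hc_mul_homog' p hg St.pos.card, if_pos le_rfl, Nat.sub_self, homogeneousComponent_zero]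
    rfl
  rw [h1, ← smul_eq_C_mul, AltOp_smul]
  have h2 : AltOp St g = C (Phi St g) * dPoly St := by
    have h3 : homogeneousComponent St.pos.card g = g :=
      (homogeneousComponent_of_mem ((mem_homogeneousSubmodule _ _).mpr hg)).trans (if_pos rfl)
    conv_lhs => rw [← h3]
    exact Phi_spec St g
  rw [h2, smul_eq_C_mul, ← mul_assoc, ← C_mul]

lemma Phi_hcN (g : S l) : Phi St (homogeneousComponent St.pos.card g) = Phi St g := by
  have h3 : homogeneousComponent St.pos.card (homogeneousComponent St.pos.card g)
      = homogeneousComponent St.pos.card g :=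
    (homogeneousComponent_of_mem ((mem_homogeneousSubmodule _ _).mpr
      (homogeneousComponent_isHomogeneous St.pos.card g))).trans (if_pos rfl)
  have h4 : AltOp St (homogeneousComponent St.pos.card
      (homogeneousComponent St.pos.card g)) = C (Phi St g) * dPoly St := by
    rw [h3]; exact Phi_spec St g
  exact Phi_eq_of St h4

end Stmt10

namespace Stmt10

variable {l : ℕ} (St : Setting l)

lemma dualVec_neg (μ : V l →ₗ[ℝ] ℝ) : dualVec (-μ) = -dualVec μ := by
  rw [dualVec, dualVec, map_neg, map_neg]

lemma reflKer_neg (μ : V l →ₗ[ℝ] ℝ) : reflKer (-μ) = reflKer μ := by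
  funext x
  rw [reflKer, reflKer, dualVec_neg]
  rw [LinearMap.neg_apply, map_neg, LinearMap.neg_apply, neg_neg]
  rw [show 2 * -μ x / μ (dualVec μ) = -(2 * μ x / μ (dualVec μ)) from by ring]
  rw [neg_smul_neg]

lemma s_neg {β : V l →ₗ[ℝ] ℝ} (hβ : β ∈ St.roots) (hnβ : -β ∈ St.roots) :
    St.s β = St.s (-β) := by
  apply LinearIsometryEquiv.ext
  intro x
  rw [St.s_apply β hβ, St.s_apply (-β) hnβ, reflKer_neg]

lemma s_mul_s {α : V l →ₗ[ℝ] ℝ} (hα : α ∈ St.roots) : St.s α * St.s α = 1 := by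
  apply LinearIsometryEquiv.ext
  intro x
  simp only [LinearIsometryEquiv.coe_mul, Function.comp_apply, LinearIsometryEquiv.coe_one,
    id_eq]
  exact s_invol St hα x

lemma polyAct_s_s {α : V l →ₗ[ℝ] ℝ} (hα : α ∈ St.roots) (q : S l) :
    polyAct (St.s α) (polyAct (St.s α) q) = q := by
  rw [← polyAct_mul, s_mul_s St hα, polyAct_one]

lemma tau_s_self {α : V l →ₗ[ℝ] ℝ} (hα : α ∈ St.roots) : tauL (St.s α) α = -α := by
  ext x
  rw [tauL_apply, s_symm_apply St hα, St.s_apply α hα, mu_reflKer (St.roots_ne_zero α hα)]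
  rfl

lemma sub_act_vanish {α : V l →ₗ[ℝ] ℝ} (hα : α ∈ St.roots) (q : S l) :
    ∀ x : V l, α x = 0 → evalV x (q - polyAct (St.s α) q) = 0 := by
  intro x hx
  have h1 : evalV x (polyAct (St.s α) q) = evalV x q := by
    rw [evalV_polyAct, s_symm_apply St hα, s_fix St hα hx]
  rw [evalV, eval_sub]
  rw [show (eval fun i => x i) q = evalV x q from rfl,
    show (eval fun i => x i) (polyAct (St.s α) q) = evalV x (polyAct (St.s α) q) from rfl, h1]
  ring

lemma Phi_s_invariant {α : V l →ₗ[ℝ] ℝ} (hα : α ∈ St.pos) {h : S l}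
    (hh : polyAct (St.s α) h = h) : Phi St h = 0 := by
  have := Phi_polyAct_s St hα h
  rw [hh] at this
  linarith

/-- Core lemma: a homogeneous polynomial killed by `Φ` against everything lies in `I_W`. -/
lemma K_sub_IW : ∀ (k : ℕ) (f : S l), f.IsHomogeneous k →
    (∀ p : S l, Phi St (p * f) = 0) → f ∈ IW St := by
  intro k
  induction k using Nat.strong_induction_on with
  | _ k IH =>
  intro f hf hK
  have hcard : ((Wfin St).card : ℝ) ≠ 0 := by
    exact_mod_cast Finset.card_ne_zero_of_mem (one_mem_Wfin St)
  rcases Nat.eq_zero_or_pos k with hk0 | hkpos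
  · subst hk0
    have hfc : f = C (constantCoeff f) := by
      have h1 : homogeneousComponent 0 f = f :=
        (homogeneousComponent_of_mem ((mem_homogeneousSubmodule _ _).mpr hf)).trans (if_pos rfl)
      conv_lhs => rw [← h1]
      rw [homogeneousComponent_zero]
      rfl
    have h2 := hK (dPoly St)
    rw [mul_comm, Phi_mul_deg_N St (dPoly_isHomogeneous St) f, Phi_dPoly] at h2
    have h3 : constantCoeff f = 0 := by
      rcases mul_eq_zero.mp h2 with h | h
      · exact h
      · exact absurd h hcard
    rw [hfc, h3, C_0]
    exact zero_mem _
  · -- k ≥ 1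
    have hstep : ∀ α ∈ St.pos, f - polyAct (St.s α) f ∈ IW St := by
      intro α hα
      have hαr : α ∈ St.roots := St.pos_subset hα
      have hα0 : α ≠ 0 := St.roots_ne_zero α hαr
      obtain ⟨g, hg⟩ := linPoly_dvd_of_vanish hα0 (sub_act_vanish St hαr f)
      have hsF : polyAct (St.s α) (f - polyAct (St.s α) f)
          = -(f - polyAct (St.s α) f) := by
        rw [map_sub, polyAct_s_s St hαr]
        ring
      have hsg : polyAct (St.s α) g = g := by
        have h1 : polyAct (St.s α) (linPoly α * g)
            = (-(linPoly α)) * polyAct (St.s α) g := by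
          rw [map_mul, polyAct_linPoly', tau_s_self St hαr, linPoly_neg]
        have h2 : polyAct (St.s α) (linPoly α * g) = -(linPoly α * g) := by
          rw [← hg]
          exact hsF
        rw [h1] at h2
        have h3 : linPoly α * polyAct (St.s α) g = linPoly α * g := by
          have := congrArg (fun z => -z) h2
          simpa using this
        exact mul_left_cancel₀ (linPoly_ne_zero hα0) h3
      have hFhom : (f - polyAct (St.s α) f).IsHomogeneous k :=
        hf.sub (polyAct_isHomogeneous _ hf)
      have hghom : g.IsHomogeneous (k - 1) := by
        have h2 : (linPoly α * g).IsHomogeneous k := by rw [← hg]; exact hFhom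
        have h3 := homog_of_factor (linPoly_isHomogeneous α) (linPoly_ne_zero hα0) h2
        rw [h3]
        exact homogeneousComponent_isHomogeneous _ g
      have hgK : ∀ p : S l, Phi St (p * g) = 0 := by
        intro p
        obtain ⟨b, hb⟩ := linPoly_dvd_of_vanish hα0 (sub_act_vanish St hαr p)
        set a : S l := p + polyAct (St.s α) p with ha
        have hsa : polyAct (St.s α) a = a := by
          rw [ha, map_add, polyAct_s_s St hαr, add_comm]
        -- 2(pg) = a g + (ℓ b) g
        have hsplit : (2:ℝ) • (p * g) = a * g + (linPoly α * b) * g := by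
          rw [ha, ← hb]
          rw [smul_eq_C_mul]
          have : (C (2:ℝ) : S l) = 1 + 1 := by
            rw [show (2:ℝ) = 1 + 1 from by norm_num, C_add, C_1]
          rw [this]
          ring
        have hPhia : Phi St (a * g) = 0 := by
          apply Phi_s_invariant St hα
          rw [map_mul, hsa, hsg]
        have hPhib : Phi St ((linPoly α * b) * g) = 0 := by
          have h1 : (linPoly α * b) * g = b * (linPoly α * g) := by ring
          rw [h1, ← hg, mul_sub]
          rw [Phi_sub]
          have h2 : Phi St (b * f) = 0 := hK b
          have h3 : Phi St (b * polyAct (St.s α) f) = 0 := by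
            have h4 : polyAct (St.s α) (polyAct (St.s α) b * f)
                = b * polyAct (St.s α) f := by
              rw [map_mul, polyAct_s_s St hαr]
            rw [← h4, Phi_polyAct_s St hα, hK (polyAct (St.s α) b), neg_zero]
          rw [h2, h3, sub_zero]
        have h5 := congrArg (Phi St) hsplit
        rw [Phi_smul, Phi_add, hPhia, hPhib, add_zero] at h5
        linarith
      have hgIW : g ∈ IW St := IH (k - 1) (by omega) g hghom hgK
      rw [hg]
      exact Ideal.mul_mem_left _ _ hgIW
    have hroots : ∀ β ∈ St.roots, f - polyAct (St.s β) f ∈ IW St := by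
      intro β hβ
      rcases St.pos_cover β hβ with h | h
      · exact hstep β h
      · rw [s_neg St hβ (St.pos_subset h)]
        exact hstep (-β) h
    have hW : ∀ w ∈ St.W, f - polyAct w f ∈ IW St := by
      intro w hw
      have hw' : w ∈ Subgroup.closure {g | ∃ α ∈ St.roots, g = St.s α} := by
        rw [← St.W_gen]; exact hw
      refine Subgroup.closure_induction ?_ ?_ ?_ ?_ hw'
      · rintro x ⟨α, hα, rfl⟩
        exact hroots α hα
      · rw [polyAct_one]
        simpa using zero_mem (IW St)
      · intro x y hx hy px py
        have hxW : x ∈ St.W := by rw [St.W_gen]; exact hx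
        have hd : f - polyAct (x * y) f
            = (f - polyAct x f) + polyAct x (f - polyAct y f) := by
          rw [polyAct_mul, map_sub]
          ring
        rw [hd]
        exact add_mem px (IW_stable St hxW py)
      · intro x hx px
        have hxW : x ∈ St.W := by rw [St.W_gen]; exact hx
        have hxx : x⁻¹ * x = 1 := by group
        have hd : f - polyAct x⁻¹ f = -(polyAct x⁻¹ (f - polyAct x f)) := by
          rw [map_sub, ← polyAct_mul, hxx, polyAct_one]
          ring
        rw [hd]
        exact neg_mem (IW_stable St (inv_mem hxW) px)
    -- averaging
    set e : S l := (((Wfin St).card : ℝ))⁻¹ • ∑ w ∈ Wfin St, polyAct w f with he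
    have hfe : f - e ∈ IW St := by
      have h1 : ∑ w ∈ Wfin St, (f - polyAct w f) ∈ IW St :=
        Submodule.sum_mem _ (fun w hw => hW w ((mem_Wfin St).mp hw))
      have h2 : f - e = (((Wfin St).card : ℝ))⁻¹ • ∑ w ∈ Wfin St, (f - polyAct w f) := by
        rw [Finset.sum_sub_distrib, Finset.sum_const, he, smul_sub]
        congr 1
        rw [← Nat.cast_smul_eq_nsmul ℝ, smul_smul, inv_mul_cancel₀ hcard, one_smul]
      rw [h2, smul_eq_C_mul]
      exact Ideal.mul_mem_left _ _ h1
    have heIW : e ∈ IW St := by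
      apply Ideal.subset_span
      constructor
      · intro u hu
        rw [he, map_smul, map_sum]
        refine congrArg (fun z => (((Wfin St).card : ℝ))⁻¹ • z) ?_
        have step1 : ∀ w ∈ Wfin St, polyAct u (polyAct w f) = polyAct (u * w) f :=
          fun w _ => (polyAct_mul u w f).symm
        rw [Finset.sum_congr rfl step1]
        apply Finset.sum_nbij' (fun w => u * w) (fun t => u⁻¹ * t)
        · intro w hw
          exact (mem_Wfin St).mpr (mul_mem hu ((mem_Wfin St).mp hw))
        · intro t ht
          exact (mem_Wfin St).mpr (mul_mem (inv_mem hu) ((mem_Wfin St).mp ht))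
        · intro w _; group
        · intro t _; group
        · intro w _; rfl
      · rw [he, smul_eq_C_mul, map_mul, constantCoeff_C, map_sum]
        have hcc : ∀ w ∈ Wfin St, constantCoeff (polyAct w f) = 0 := by
          intro w _
          rw [cc_polyAct]
          exact hc_homog_cc hkpos hf
        rw [Finset.sum_congr rfl hcc, Finset.sum_const, smul_zero, mul_zero]
    have hsplit : f = (f - e) + e := by ring
    have := add_mem hfe heIW
    rwa [sub_add_cancel] at this

end Stmt10

open Stmt10 in
/-- Let `I` be a graded ideal of `S` (an ideal which is also spanned
by its homogeneous components) with `I_W ⊆ I`. Then `I = I_W` if and only if the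
product of all positive roots `d = ∏_{α∈Π⁺} α` does not belong to `I`. -/
theorem stmt_10 {l : ℕ} (St : Setting l) (I : Ideal (S l))
    (hgraded : IsGradedIdeal I) (hIW : IW St ≤ I) :
    I = IW St ↔ dPoly St ∉ I := by
  constructor
  · intro hEq
    rw [hEq]
    exact dPoly_not_mem_IW St
  · intro hd
    apply le_antisymm _ hIW
    intro f hfI
    have hcomp : ∀ k, homogeneousComponent k f ∈ IW St := by
      intro k
      have hkI : homogeneousComponent k f ∈ I := hgraded f hfI k
      apply K_sub_IW St k _ (homogeneousComponent_isHomogeneous k f)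
      intro p
      by_contra hp
      set g : S l := homogeneousComponent k f with hgdef
      set t : ℝ := Phi St (p * g) with ht
      have ht0 : t ≠ 0 := hp
      have hpgI : p * g ∈ I := I.mul_mem_left p hkI
      have hhI : homogeneousComponent St.pos.card (p * g) ∈ I := hgraded _ hpgI _
      set h' : S l := homogeneousComponent St.pos.card (p * g) with hh'
      have hPhih : Phi St h' = t := Phi_hcN St (p * g)
      set c : ℝ := ((Wfin St).card : ℝ) with hc
      have hcard : c ≠ 0 := by
        rw [hc]
        exact_mod_cast Finset.card_ne_zero_of_mem (one_mem_Wfin St)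
      set g' : S l := h' - C (t / c) * dPoly St with hg'
      have hg'phi : Phi St g' = 0 := by
        rw [hg', Phi_sub, hPhih]
        have h1 : Phi St (C (t / c) * dPoly St) = t / c * Phi St (dPoly St) := by
          rw [← smul_eq_C_mul, Phi_smul]
        rw [h1, Phi_dPoly, ← hc, div_mul_cancel₀ t hcard, sub_self]
      have hg'hom : g'.IsHomogeneous St.pos.card := by
        rw [hg']
        apply (homogeneousComponent_isHomogeneous _ _).sub
        simpa using (isHomogeneous_C (Fin l) (t / c)).mul (dPoly_isHomogeneous St)
      have hg'K : ∀ q : S l, Phi St (q * g') = 0 := fun q => by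
        rw [Phi_mul_deg_N St hg'hom q, hg'phi, mul_zero]
      have hg'IW : g' ∈ IW St := K_sub_IW St St.pos.card g' hg'hom hg'K
      have hdI : C (t / c) * dPoly St ∈ I := by
        have h2 : C (t / c) * dPoly St = h' - g' := by rw [hg']; ring
        rw [h2]
        exact sub_mem hhI (hIW hg'IW)
      apply hd
      have h3 : c / t * (t / c) = 1 := by field_simp
      have h4 : dPoly St = C (c / t) * (C (t / c) * dPoly St) := by
        rw [← mul_assoc, ← C_mul, h3, C_1, one_mul]
      rw [h4]
      exact I.mul_mem_left _ hdI
    have hf : f = ∑ k ∈ Finset.range (f.totalDegree + 1), homogeneousComponent k f :=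
      (sum_homogeneousComponent f).symm
    rw [hf]
    exact Submodule.sum_mem _ (fun k _ => hcomp k)

end
end

section
/- The product of all positive roots d = ∏_{α∈Π⁺} α does not belong to the ideal I_W generated by the nonconstant W-invariant polynomials. -/
open MvPolynomial

attribute [local instance] Classical.propDecidable

noncomputable section

variable {l : ℕ}

namespace Stmt11

variable {l : ℕ}

def ofFun (y : Fin l → ℝ) : V l := WithLp.toLp 2 y

def toFun (x : V l) : Fin l → ℝ := x.ofLp

@[simp] lemma ofFun_apply (y : Fin l → ℝ) (i : Fin l) : ofFun y i = y i := rfl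
@[simp] lemma toFun_apply (x : V l) (i : Fin l) : toFun x i = x i := rfl
@[simp] lemma ofFun_toFun (x : V l) : ofFun (toFun x) = x := rfl
@[simp] lemma toFun_ofFun (y : Fin l → ℝ) : toFun (ofFun y) = y := rfl

lemma sum_single (y : Fin l → ℝ) :
    (∑ i, y i • EuclideanSpace.single i (1:ℝ) : V l) = ofFun y := by
  have h := (EuclideanSpace.basisFun (Fin l) ℝ).sum_repr (ofFun y)
  simpa [EuclideanSpace.basisFun_apply, EuclideanSpace.basisFun_repr] using h

lemma apply_eq_sum (μ : V l →ₗ[ℝ] ℝ) (y : Fin l → ℝ) :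
    μ (ofFun y) = ∑ i, y i * μ (EuclideanSpace.single i 1) := by
  rw [← sum_single, map_sum]
  simp [smul_eq_mul]

lemma eval_linPoly (μ : V l →ₗ[ℝ] ℝ) (y : Fin l → ℝ) :
    MvPolynomial.eval y (linPoly μ) = μ (ofFun y) := by
  rw [apply_eq_sum, linPoly]
  simp [mul_comm]

lemma eval_aeval' (φ : Fin l → S l) (y : Fin l → ℝ) (f : S l) :
    MvPolynomial.eval y (MvPolynomial.aeval φ f) =
      MvPolynomial.eval (fun i => MvPolynomial.eval y (φ i)) f := by
  induction f using MvPolynomial.induction_on with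
  | C => simp
  | add p q hp hq => simp only [map_add, hp, hq]
  | mul_X p i hp => simp only [map_mul, MvPolynomial.aeval_X, MvPolynomial.eval_X, hp]

lemma eval_polyAct (g : V l ≃ₗᵢ[ℝ] V l) (f : S l) (y : Fin l → ℝ) :
    MvPolynomial.eval y (polyAct g f) =
      MvPolynomial.eval (toFun (g.symm (ofFun y))) f := by
  rw [polyAct, eval_aeval']
  have : (fun i => MvPolynomial.eval y
      (linPoly ((EuclideanSpace.basisFun (Fin l) ℝ).toBasis.coord i ∘ₗ
        g.symm.toLinearEquiv.toLinearMap))) = toFun (g.symm (ofFun y)) := by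
    funext i
    rw [eval_linPoly]
    simp [Module.Basis.coord_apply, OrthonormalBasis.coe_toBasis_repr_apply,
      EuclideanSpace.basisFun_repr]
  rw [this]

end Stmt11
namespace Stmt11

variable {l : ℕ}

lemma poly_ext {f g : S l} (h : ∀ x : V l, MvPolynomial.eval (toFun x) f =
    MvPolynomial.eval (toFun x) g) : f = g :=
  MvPolynomial.funext fun y => h (ofFun y)

lemma polyAct_one (f : S l) : polyAct (1 : V l ≃ₗᵢ[ℝ] V l) f = f := by
  apply poly_ext; intro x
  rw [eval_polyAct]
  rfl

lemma polyAct_mul (g h : V l ≃ₗᵢ[ℝ] V l) (f : S l) :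
    polyAct (g * h) f = polyAct g (polyAct h f) := by
  apply poly_ext; intro x
  rw [eval_polyAct, eval_polyAct, eval_polyAct]
  rfl

lemma polyAct_linPoly (g : V l ≃ₗᵢ[ℝ] V l) (μ : V l →ₗ[ℝ] ℝ) :
    polyAct g (linPoly μ) = linPoly (μ ∘ₗ g.symm.toLinearEquiv.toLinearMap) := by
  apply poly_ext; intro x
  rw [eval_polyAct, eval_linPoly, eval_linPoly]
  rfl

lemma linPoly_inj {μ ν : V l →ₗ[ℝ] ℝ} (h : linPoly μ = linPoly ν) : μ = ν := by
  ext x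
  have := congrArg (MvPolynomial.eval (toFun x)) h
  rwa [eval_linPoly, eval_linPoly, ofFun_toFun] at this

lemma linPoly_neg (μ : V l →ₗ[ℝ] ℝ) : linPoly (-μ) = -linPoly μ := by
  apply poly_ext; intro x
  rw [eval_linPoly, map_neg, eval_linPoly]
  rfl

lemma linPoly_ne_zero {μ : V l →ₗ[ℝ] ℝ} (h : μ ≠ 0) : linPoly μ ≠ 0 := by
  intro h0
  apply h
  ext x
  have := congrArg (MvPolynomial.eval (toFun x)) h0
  rw [eval_linPoly, ofFun_toFun] at this
  simpa using this

lemma inner_dualVec (μ : V l →ₗ[ℝ] ℝ) (x : V l) :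
    (inner ℝ (dualVec μ) x : ℝ) = μ x := by
  rw [dualVec, InnerProductSpace.toDual_symm_apply]
  simp

lemma mu_dualVec_ne_zero {μ : V l →ₗ[ℝ] ℝ} (h : μ ≠ 0) : μ (dualVec μ) ≠ 0 := by
  rw [← inner_dualVec]
  rw [inner_self_eq_zero.ne]
  intro h0
  apply h
  ext x
  rw [← inner_dualVec, h0]
  simp

lemma reflKer_fixed {μ : V l →ₗ[ℝ] ℝ} {x : V l} (h : μ x = 0) : reflKer μ x = x := by
  rw [reflKer, h]
  simp

lemma mu_reflKer {μ : V l →ₗ[ℝ] ℝ} (hμ : μ ≠ 0) (x : V l) :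
    μ (reflKer μ x) = -μ x := by
  have h := mu_dualVec_ne_zero hμ
  rw [reflKer, map_sub, map_smul, smul_eq_mul]
  field_simp
  ring

lemma reflKer_invol {μ : V l →ₗ[ℝ] ℝ} (hμ : μ ≠ 0) (x : V l) :
    reflKer μ (reflKer μ x) = x := by
  have h := mu_dualVec_ne_zero hμ
  rw [reflKer, mu_reflKer hμ, reflKer]
  rw [sub_sub, ← add_smul]
  have : 2 * μ x / μ (dualVec μ) + 2 * -μ x / μ (dualVec μ) = 0 := by
    field_simp
    ring
  rw [this]
  simp

end Stmt11
namespace Stmt11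

variable {l : ℕ}

open MvPolynomial

/-- Substitute `0` for `X i`. -/
def evZero (i : Fin l) : S l →ₐ[ℝ] S l :=
  aeval (fun j => if j = i then 0 else X j)

lemma X_dvd_sub_evZero (i : Fin l) (p : S l) : (X i : S l) ∣ p - evZero i p := by
  induction p using MvPolynomial.induction_on with
  | C a => simp [evZero]
  | add p q hp hq =>
      have : p + q - evZero i (p + q) = (p - evZero i p) + (q - evZero i q) := by
        rw [map_add]; ring
      rw [this]; exact dvd_add hp hq
  | mul_X p j hp =>
      rw [map_mul, evZero, aeval_X]
      by_cases hj : j = i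
      · subst hj
        rw [if_pos rfl, mul_zero, sub_zero]
        exact Dvd.dvd.mul_left (dvd_refl _) p
      · rw [if_neg hj]
        have : p * X j - evZero i p * X j = (p - evZero i p) * X j := by ring
        rw [show (aeval fun j => if j = i then (0:S l) else X j) p = evZero i p from rfl, this]
        exact Dvd.dvd.mul_right hp _

lemma X_dvd_iff_evZero {i : Fin l} {p : S l} : (X i : S l) ∣ p ↔ evZero i p = 0 := by
  constructor
  · rintro ⟨q, rfl⟩
    rw [map_mul]
    simp [evZero]
  · intro h
    have := X_dvd_sub_evZero i p
    rwa [h, sub_zero] at this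

lemma prime_X (i : Fin l) : Prime (X i : S l) := by
  refine ⟨MvPolynomial.X_ne_zero i, ?_, ?_⟩
  · intro hu
    obtain ⟨v, hv⟩ := hu.exists_right_inv
    have := congrArg (evZero i) hv
    rw [map_mul, map_one] at this
    simp [evZero] at this
  · intro a b hab
    rw [X_dvd_iff_evZero, map_mul] at hab
    rcases mul_eq_zero.1 hab with h | h
    · exact Or.inl (X_dvd_iff_evZero.2 h)
    · exact Or.inr (X_dvd_iff_evZero.2 h)

lemma X_dvd_of_vanishing {i : Fin l} {g : S l}
    (h : ∀ y : Fin l → ℝ, y i = 0 → eval y g = 0) : (X i : S l) ∣ g := by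
  rw [X_dvd_iff_evZero]
  apply MvPolynomial.funext
  intro y
  have he : evZero i g = aeval (fun j => if j = i then (0 : S l) else X j) g := rfl
  rw [he, eval_aeval', map_zero]
  apply h
  simp

end Stmt11
namespace Stmt11

variable {l : ℕ}

open MvPolynomial

lemma linPoly_def (α : V l →ₗ[ℝ] ℝ) :
    linPoly α = ∑ j, C (α (EuclideanSpace.single j 1)) * X j := rfl

/-- change of variables sending `X i` to `linPoly α` -/
def chA (α : V l →ₗ[ℝ] ℝ) (i : Fin l) : S l →ₐ[ℝ] S l :=
  aeval (fun j => if j = i then linPoly α else X j)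

/-- inverse change of variables -/
def chB (α : V l →ₗ[ℝ] ℝ) (i : Fin l) : S l →ₐ[ℝ] S l :=
  aeval (fun j => if j = i then
    C (α (EuclideanSpace.single i 1))⁻¹ *
      (X i - ∑ j' ∈ Finset.univ.erase i, C (α (EuclideanSpace.single j' 1)) * X j')
    else X j)

lemma linPoly_split (α : V l →ₗ[ℝ] ℝ) (i : Fin l) :
    linPoly α = C (α (EuclideanSpace.single i 1)) * X i +
      ∑ j' ∈ Finset.univ.erase i, C (α (EuclideanSpace.single j' 1)) * X j' := by
  rw [linPoly_def]
  exact (Finset.add_sum_erase _ _ (Finset.mem_univ i)).symm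

lemma chA_chB (α : V l →ₗ[ℝ] ℝ) {i : Fin l}
    (hc : α (EuclideanSpace.single i 1) ≠ 0) (p : S l) :
    chA α i (chB α i p) = p := by
  have : (chA α i).comp (chB α i) = AlgHom.id ℝ (S l) := by
    apply MvPolynomial.algHom_ext
    intro j
    simp only [AlgHom.coe_comp, Function.comp_apply, AlgHom.coe_id, id_eq]
    by_cases hj : j = i
    · subst hj
      rw [chB, aeval_X, if_pos rfl]
      rw [map_mul, map_sub, map_sum]
      have h1 : chA α j (X j) = linPoly α := by rw [chA, aeval_X, if_pos rfl]
      have h2 : ∀ j' ∈ Finset.univ.erase j,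
          chA α j (C (α (EuclideanSpace.single j' 1)) * X j') =
            C (α (EuclideanSpace.single j' 1)) * X j' := by
        intro j' hj'
        rw [map_mul, chA, aeval_X, if_neg (Finset.ne_of_mem_erase hj'), aeval_C]
        rfl
      rw [h1, Finset.sum_congr rfl h2]
      have hC : chA α j (C (α (EuclideanSpace.single j 1))⁻¹) =
          C (α (EuclideanSpace.single j 1))⁻¹ := by
        rw [chA, aeval_C]; rfl
      rw [hC, linPoly_split α j]
      rw [add_sub_cancel_right, ← mul_assoc, ← map_mul, inv_mul_cancel₀ hc, map_one, one_mul]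
    · rw [chB, aeval_X, if_neg hj, chA, aeval_X, if_neg hj]
  exact DFunLike.congr_fun this p

lemma chB_chA (α : V l →ₗ[ℝ] ℝ) {i : Fin l}
    (hc : α (EuclideanSpace.single i 1) ≠ 0) (p : S l) :
    chB α i (chA α i p) = p := by
  have : (chB α i).comp (chA α i) = AlgHom.id ℝ (S l) := by
    apply MvPolynomial.algHom_ext
    intro j
    simp only [AlgHom.coe_comp, Function.comp_apply, AlgHom.coe_id, id_eq]
    by_cases hj : j = i
    · subst hj
      rw [chA, aeval_X, if_pos rfl, linPoly_split α j]
      rw [map_add, map_mul, map_sum]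
      have h2 : ∀ j' ∈ Finset.univ.erase j,
          chB α j (C (α (EuclideanSpace.single j' 1)) * X j') =
            C (α (EuclideanSpace.single j' 1)) * X j' := by
        intro j' hj'
        rw [map_mul, chB, aeval_X, if_neg (Finset.ne_of_mem_erase hj'), aeval_C]
        rfl
      rw [Finset.sum_congr rfl h2]
      have hC : chB α j (C (α (EuclideanSpace.single j 1))) =
          C (α (EuclideanSpace.single j 1)) := by
        rw [chB, aeval_C]; rfl
      rw [hC, chB, aeval_X, if_pos rfl, ← mul_assoc, ← map_mul,
        mul_inv_cancel₀ hc, map_one, one_mul, sub_add_cancel]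
    · rw [chA, aeval_X, if_neg hj, chB, aeval_X, if_neg hj]
  exact DFunLike.congr_fun this p

lemma exists_coeff_ne_zero {α : V l →ₗ[ℝ] ℝ} (hα : α ≠ 0) :
    ∃ i : Fin l, α (EuclideanSpace.single i 1) ≠ 0 := by
  by_contra hno
  push_neg at hno
  apply hα
  ext x
  have := apply_eq_sum α (toFun x)
  rw [ofFun_toFun] at this
  simp only [hno, mul_zero, Finset.sum_const_zero] at this
  simpa using this

lemma dvd_of_vanishing {α : V l →ₗ[ℝ] ℝ} (hα : α ≠ 0) {f : S l}
    (hf : ∀ x : V l, α x = 0 → MvPolynomial.eval (toFun x) f = 0) :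
    linPoly α ∣ f := by
  obtain ⟨i, hc⟩ := exists_coeff_ne_zero hα
  have hXg : (X i : S l) ∣ chB α i f := by
    apply X_dvd_of_vanishing
    intro y hy
    have he : chB α i f = aeval (fun j => if j = i then
        C (α (EuclideanSpace.single i 1))⁻¹ *
          (X i - ∑ j' ∈ Finset.univ.erase i, C (α (EuclideanSpace.single j' 1)) * X j')
        else X j) f := rfl
    rw [he, eval_aeval']
    set y' : Fin l → ℝ := fun j => MvPolynomial.eval y (if j = i then
        C (α (EuclideanSpace.single i 1))⁻¹ *
          (X i - ∑ j' ∈ Finset.univ.erase i, C (α (EuclideanSpace.single j' 1)) * X j')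
        else X j) with hy'
    have hyj : ∀ j, j ≠ i → y' j = y j := by
      intro j hj
      rw [hy']
      simp [if_neg hj]
    have hyi : y' i = (α (EuclideanSpace.single i 1))⁻¹ *
        (0 - ∑ j' ∈ Finset.univ.erase i, α (EuclideanSpace.single j' 1) * y j') := by
      have h0 : y' i = MvPolynomial.eval y (C (α (EuclideanSpace.single i 1))⁻¹ *
          (X i - ∑ j' ∈ Finset.univ.erase i, C (α (EuclideanSpace.single j' 1)) * X j')) := by
        rw [hy']
        exact congrArg _ (if_pos rfl)
      rw [h0]
      simp only [map_mul, map_sub, map_sum, eval_C, eval_X, eval_mul, hy]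
    have hker : α (ofFun y') = 0 := by
      rw [apply_eq_sum, ← Finset.add_sum_erase _ _ (Finset.mem_univ i)]
      have : ∑ j ∈ Finset.univ.erase i, y' j * α (EuclideanSpace.single j 1) =
          ∑ j ∈ Finset.univ.erase i, α (EuclideanSpace.single j 1) * y j := by
        apply Finset.sum_congr rfl
        intro j hj
        rw [hyj j (Finset.ne_of_mem_erase hj), mul_comm]
      rw [this, hyi]
      field_simp
      ring
    have := hf (ofFun y') hker
    rwa [toFun_ofFun] at this
  obtain ⟨h, hh⟩ := hXg
  refine ⟨chA α i h, ?_⟩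
  have : f = chA α i (chB α i f) := (chA_chB α hc f).symm
  rw [this, hh, map_mul, chA, aeval_X, if_pos rfl]

lemma prime_linPoly {α : V l →ₗ[ℝ] ℝ} (hα : α ≠ 0) : Prime (linPoly α) := by
  obtain ⟨i, hc⟩ := exists_coeff_ne_zero hα
  set E : S l ≃ₐ[ℝ] S l := AlgEquiv.ofAlgHom (chA α i) (chB α i)
    (AlgHom.ext fun p => chA_chB α hc p) (AlgHom.ext fun p => chB_chA α hc p) with hEdef
  have h1 : Prime (E (X i)) := (MulEquiv.prime_iff E.toRingEquiv.toMulEquiv).2 (prime_X i)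
  have hE : E (X i) = linPoly α := by
    show chA α i (X i) = _
    rw [chA, aeval_X, if_pos rfl]
  rwa [hE] at h1

lemma not_dvd_linPoly (St : Setting l) {α β : V l →ₗ[ℝ] ℝ}
    (hα : α ∈ St.pos) (hβ : β ∈ St.pos) (hne : α ≠ β) : ¬ linPoly α ∣ linPoly β := by
  rintro ⟨h, hh⟩
  have hαr := St.pos_subset hα
  have hα0 : α ≠ 0 := St.roots_ne_zero α hαr
  have hβ0 : β ≠ 0 := St.roots_ne_zero β (St.pos_subset hβ)
  have hpt : ∀ x : V l, β x = α x * MvPolynomial.eval (toFun x) h := by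
    intro x
    have := congrArg (MvPolynomial.eval (toFun x)) hh
    rwa [eval_linPoly, map_mul, eval_linPoly, ofFun_toFun] at this
  -- pick u with α u = 1
  have hv : α (dualVec α) ≠ 0 := mu_dualVec_ne_zero hα0
  set u : V l := (α (dualVec α))⁻¹ • dualVec α with hu
  have hαu : α u = 1 := by
    rw [hu, map_smul, smul_eq_mul, inv_mul_cancel₀ hv]
  have hβα : β = β u • α := by
    ext x
    have hz : α (x - α x • u) = 0 := by
      rw [map_sub, map_smul, smul_eq_mul, hαu, mul_one, sub_self]
    have hbz : β (x - α x • u) = 0 := by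
      rw [hpt, hz, zero_mul]
    rw [map_sub, map_smul, smul_eq_mul, sub_eq_zero] at hbz
    rw [LinearMap.smul_apply, smul_eq_mul, hbz, mul_comm]
  have hmem : (β u) • α ∈ St.roots := by rw [← hβα]; exact St.pos_subset hβ
  rcases St.roots_reduced α hαr (β u) hmem with h1 | h1
  · rw [h1, one_smul] at hβα
    exact hne hβα.symm
  · rw [h1] at hβα
    have : -α ∈ St.pos := by
      rw [show (-1 : ℝ) • α = -α from neg_one_smul ℝ α] at hβα
      rw [← hβα]; exact hβ
    exact St.pos_disjoint α hα this

lemma prod_linPoly_dvd (St : Setting l) (t : Finset (V l →ₗ[ℝ] ℝ)) (ht : t ⊆ St.pos)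
    (f : S l) (hdvd : ∀ a ∈ t, linPoly a ∣ f) : ∏ a ∈ t, linPoly a ∣ f := by
  induction t using Finset.induction_on generalizing f with
  | empty => simp
  | insert _ _ ha =>
    rename_i a s ih
    have hat : a ∈ St.pos := ht (Finset.mem_insert_self a s)
    obtain ⟨g, hg⟩ := hdvd a (Finset.mem_insert_self a s)
    have hsub : s ⊆ St.pos := fun x hx => ht (Finset.mem_insert_of_mem hx)
    have hdvds : ∀ b ∈ s, linPoly b ∣ g := by
      intro b hb
      have hbt : b ∈ St.pos := hsub hb
      have hbdvd : linPoly b ∣ linPoly a * g := hg ▸ hdvd b (Finset.mem_insert_of_mem hb)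
      have hbprime : Prime (linPoly b) :=
        prime_linPoly (St.roots_ne_zero b (St.pos_subset hbt))
      rcases hbprime.2.2 _ _ hbdvd with h1 | h1
      · exact absurd h1 (not_dvd_linPoly St hbt hat (fun he => ha (he ▸ hb)))
      · exact h1
    rw [Finset.prod_insert ha, hg]
    exact mul_dvd_mul_left _ (ih hsub g hdvds)

end Stmt11
namespace Stmt11

variable {l : ℕ}

open MvPolynomial

lemma s_invol (St : Setting l) {α : V l →ₗ[ℝ] ℝ} (hα : α ∈ St.roots) (x : V l) :
    St.s α (St.s α x) = x := by
  rw [St.s_apply α hα, St.s_apply α hα]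
  exact reflKer_invol (St.roots_ne_zero α hα) x

lemma s_symm (St : Setting l) {α : V l →ₗ[ℝ] ℝ} (hα : α ∈ St.roots) :
    (St.s α).symm = St.s α := by
  apply LinearIsometryEquiv.ext
  intro y
  apply (St.s α).injective
  rw [LinearIsometryEquiv.apply_symm_apply, s_invol St hα]

lemma s_mul_self (St : Setting l) {α : V l →ₗ[ℝ] ℝ} (hα : α ∈ St.roots) :
    St.s α * St.s α = 1 := by
  apply LinearIsometryEquiv.ext
  intro x
  have h1 : (St.s α * St.s α) x = St.s α (St.s α x) := rfl
  rw [h1, s_invol St hα]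
  rfl

lemma mu_s (St : Setting l) {α : V l →ₗ[ℝ] ℝ} (hα : α ∈ St.roots) (x : V l) :
    α (St.s α x) = -α x := by
  rw [St.s_apply α hα]
  exact mu_reflKer (St.roots_ne_zero α hα) x

lemma dPoly_ne_zero (St : Setting l) : dPoly St ≠ 0 := by
  rw [dPoly, Finset.prod_ne_zero_iff]
  intro α hα
  exact linPoly_ne_zero (St.roots_ne_zero α (St.pos_subset hα))

lemma prod_pm {X : Type*} (t : Finset X) (f : X → ℝ) (h : ∀ a ∈ t, f a = 1 ∨ f a = -1) :
    (∏ a ∈ t, f a) = 1 ∨ (∏ a ∈ t, f a) = -1 := by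
  induction t using Finset.induction_on with
  | empty => left; simp
  | insert _ _ ha =>
    rename_i a s ih
    rw [Finset.prod_insert ha]
    rcases h a (Finset.mem_insert_self a s) with h1 | h1 <;>
      rcases ih (fun b hb => h b (Finset.mem_insert_of_mem hb)) with h2 | h2 <;>
        rw [h1, h2] <;> simp

lemma polyAct_dPoly (St : Setting l) {w : V l ≃ₗᵢ[ℝ] V l} (hw : w ∈ St.W) :
    ∃ c : ℝ, (c = 1 ∨ c = -1) ∧ polyAct w (dPoly St) = C c * dPoly St := by
  set A : (V l →ₗ[ℝ] ℝ) → (V l →ₗ[ℝ] ℝ) :=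
    fun α => α ∘ₗ w.symm.toLinearEquiv.toLinearMap with hA
  have hAroots : ∀ α ∈ St.pos, A α ∈ St.roots :=
    fun α hα => St.roots_W_invariant α (St.pos_subset hα) w hw
  have hAinj : ∀ α β : V l →ₗ[ℝ] ℝ, A α = A β → α = β := by
    intro α β h
    ext y
    have := DFunLike.congr_fun h (w y)
    simpa [hA] using this
  have hAneg : ∀ α : V l →ₗ[ℝ] ℝ, A (-α) = -A α := by
    intro α; ext y; simp [hA]
  set σ : (V l →ₗ[ℝ] ℝ) → (V l →ₗ[ℝ] ℝ) :=
    fun α => if A α ∈ St.pos then A α else -A α with hσdef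
  set η : (V l →ₗ[ℝ] ℝ) → ℝ := fun α => if A α ∈ St.pos then 1 else -1 with hηdef
  have hσpos : ∀ α ∈ St.pos, σ α ∈ St.pos := by
    intro α hα
    simp only [hσdef]
    by_cases h : A α ∈ St.pos
    · rwa [if_pos h]
    · rw [if_neg h]
      rcases St.pos_cover (A α) (hAroots α hα) with h1 | h1
      · exact absurd h1 h
      · exact h1
  have hlin : ∀ α ∈ St.pos, polyAct w (linPoly α) = C (η α) * linPoly (σ α) := by
    intro α hα
    rw [polyAct_linPoly]
    simp only [hσdef, hηdef]
    by_cases h : A α ∈ St.pos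
    · rw [if_pos h, if_pos h, map_one, one_mul]
    · rw [if_neg h, if_neg h, linPoly_neg, map_neg, map_one]
      ring
  have hσinj : Set.InjOn σ St.pos := by
    intro α hα β hβ hins
    simp only [hσdef] at hins
    by_cases h1 : A α ∈ St.pos <;> by_cases h2 : A β ∈ St.pos
    · rw [if_pos h1, if_pos h2] at hins; exact hAinj _ _ hins
    · rw [if_pos h1, if_neg h2] at hins
      exfalso
      have hthis : A α = A (-β) := by rw [hAneg]; exact hins
      have hab : α = -β := hAinj _ _ hthis
      have hα' : α ∈ St.pos := Finset.mem_coe.mp hα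
      rw [hab] at hα'
      exact St.pos_disjoint β (Finset.mem_coe.mp hβ) hα'
    · rw [if_neg h1, if_pos h2] at hins
      exfalso
      have hthis : A (-α) = A β := by rw [hAneg, hins]
      have hab : -α = β := hAinj _ _ hthis
      have hβ' : β ∈ St.pos := Finset.mem_coe.mp hβ
      rw [← hab] at hβ'
      exact St.pos_disjoint α (Finset.mem_coe.mp hα) hβ'
    · rw [if_neg h1, if_neg h2, neg_inj] at hins
      exact hAinj _ _ hins
  have hσsurj : Set.SurjOn σ St.pos St.pos := by
    intro b hb
    obtain ⟨a, ha, hba⟩ := Finset.surj_on_of_inj_on_of_card_le (fun a _ => σ a)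
      (fun a ha => hσpos a ha)
      (fun a₁ a₂ ha₁ ha₂ he => hσinj (Finset.mem_coe.mpr ha₁) (Finset.mem_coe.mpr ha₂) he)
      (le_refl _) b (Finset.mem_coe.mp hb)
    exact ⟨a, Finset.mem_coe.mpr ha, hba.symm⟩
  have hprodσ : ∏ α ∈ St.pos, linPoly (σ α) = dPoly St := by
    rw [dPoly]
    exact Finset.prod_nbij σ (fun a ha => hσpos a ha) hσinj hσsurj (fun a ha => rfl)
  refine ⟨∏ α ∈ St.pos, η α, prod_pm _ _ ?_, ?_⟩
  · intro α hα
    simp only [hηdef]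
    by_cases h : A α ∈ St.pos
    · left; rw [if_pos h]
    · right; rw [if_neg h]
  · rw [dPoly, map_prod, Finset.prod_congr rfl hlin, Finset.prod_mul_distrib,
      ← map_prod, hprodσ, dPoly]

/-- the sign character of `W` -/
def eps (St : Setting l) (w : V l ≃ₗᵢ[ℝ] V l) : ℝ :=
  if polyAct w (dPoly St) = dPoly St then 1 else -1

lemma eps_pm (St : Setting l) (w : V l ≃ₗᵢ[ℝ] V l) :
    eps St w = 1 ∨ eps St w = -1 := by
  rw [eps]
  by_cases h : polyAct w (dPoly St) = dPoly St
  · left; rw [if_pos h]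
  · right; rw [if_neg h]

lemma eps_spec (St : Setting l) {w : V l ≃ₗᵢ[ℝ] V l} (hw : w ∈ St.W) :
    polyAct w (dPoly St) = C (eps St w) * dPoly St := by
  obtain ⟨c, hc, h⟩ := polyAct_dPoly St hw
  rw [eps]
  by_cases he : polyAct w (dPoly St) = dPoly St
  · rw [if_pos he, map_one, one_mul, he]
  · rw [if_neg he]
    rcases hc with h1 | h1
    · exfalso
      apply he
      rw [h, h1, map_one, one_mul]
    · rw [h, h1]

lemma polyAct_C (g : V l ≃ₗᵢ[ℝ] V l) (c : ℝ) : polyAct g (C c) = C c := by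
  have h1 : (C c : S l) = algebraMap ℝ (S l) c := rfl
  rw [h1, AlgHom.commutes]

lemma eps_mul (St : Setting l) {u v : V l ≃ₗᵢ[ℝ] V l} (hu : u ∈ St.W) (hv : v ∈ St.W) :
    eps St (u * v) = eps St u * eps St v := by
  have h1 := eps_spec St (mul_mem hu hv)
  rw [polyAct_mul, eps_spec St hv, map_mul, eps_spec St hu, polyAct_C] at h1
  have h2 : C (eps St (u * v)) * dPoly St = C (eps St u * eps St v) * dPoly St := by
    rw [← h1, map_mul]; ring
  have := mul_right_cancel₀ (dPoly_ne_zero St) h2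
  exact MvPolynomial.C_injective _ _ this

end Stmt11
namespace Stmt11

variable {l : ℕ}

open MvPolynomial

lemma exists_generic_aux (α : V l →ₗ[ℝ] ℝ) (t : Finset (V l →ₗ[ℝ] ℝ))
    (h : ∀ β ∈ t, ∃ y : V l, α y = 0 ∧ β y ≠ 0) :
    ∃ x : V l, α x = 0 ∧ ∀ β ∈ t, β x ≠ 0 := by
  induction t using Finset.induction_on with
  | empty => exact ⟨0, map_zero α, fun β hβ => absurd hβ (Finset.notMem_empty β)⟩
  | insert _ _ ha =>
    rename_i β₀ s ih
    obtain ⟨x, hx0, hx⟩ := ih (fun β hβ => h β (Finset.mem_insert_of_mem hβ))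
    obtain ⟨y, hy0, hy⟩ := h β₀ (Finset.mem_insert_self β₀ s)
    set bad : Finset ℝ := insert (-(β₀ x) / β₀ y) (s.image fun β => -(β x) / β y) with hbad
    obtain ⟨t0, ht0⟩ := Infinite.exists_notMem_finset bad
    refine ⟨x + t0 • y, by rw [map_add, map_smul, hx0, hy0, smul_zero, add_zero], ?_⟩
    intro β hβ
    rcases Finset.mem_insert.mp hβ with rfl | hβs
    · intro hz
      rw [map_add, map_smul, smul_eq_mul] at hz
      have : t0 = -(β x) / β y := by
        field_simp
        linarith
      apply ht0
      rw [hbad, this]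
      exact Finset.mem_insert_self _ _
    · intro hz
      rw [map_add, map_smul, smul_eq_mul] at hz
      by_cases hby : β y = 0
      · rw [hby, mul_zero, add_zero] at hz
        exact hx β hβs hz
      · have : t0 = -(β x) / β y := by
          field_simp
          linarith
        apply ht0
        rw [hbad, this]
        exact Finset.mem_insert_of_mem (Finset.mem_image_of_mem _ hβs)

lemma restriction_ne_zero (St : Setting l) {α β : V l →ₗ[ℝ] ℝ}
    (hα : α ∈ St.pos) (hβ : β ∈ St.pos.erase α) :
    ∃ y : V l, α y = 0 ∧ β y ≠ 0 := by
  by_contra hno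
  push_neg at hno
  have hα0 : α ≠ 0 := St.roots_ne_zero α (St.pos_subset hα)
  have hβpos : β ∈ St.pos := Finset.mem_of_mem_erase hβ
  have hβα : β ≠ α := Finset.ne_of_mem_erase hβ
  have hv : α (dualVec α) ≠ 0 := mu_dualVec_ne_zero hα0
  set u : V l := (α (dualVec α))⁻¹ • dualVec α with hu
  have hαu : α u = 1 := by
    rw [hu, map_smul, smul_eq_mul, inv_mul_cancel₀ hv]
  have hβα2 : β = β u • α := by
    ext x
    have hz : α (x - α x • u) = 0 := by
      rw [map_sub, map_smul, smul_eq_mul, hαu, mul_one, sub_self]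
    have hbz : β (x - α x • u) = 0 := hno _ hz
    rw [map_sub, map_smul, smul_eq_mul, sub_eq_zero] at hbz
    rw [LinearMap.smul_apply, smul_eq_mul, hbz, mul_comm]
  have hmem : (β u) • α ∈ St.roots := by rw [← hβα2]; exact St.pos_subset hβpos
  rcases St.roots_reduced α (St.pos_subset hα) (β u) hmem with h1 | h1
  · rw [h1, one_smul] at hβα2
    exact hβα hβα2
  · rw [h1, show (-1 : ℝ) • α = -α from neg_one_smul ℝ α] at hβα2
    apply St.pos_disjoint α hα
    rw [← hβα2]
    exact hβpos

lemma eps_s (St : Setting l) {α : V l →ₗ[ℝ] ℝ} (hα : α ∈ St.pos) :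
    eps St (St.s α) = -1 := by
  have hαr : α ∈ St.roots := St.pos_subset hα
  have hα0 : α ≠ 0 := St.roots_ne_zero α hαr
  have hne : polyAct (St.s α) (dPoly St) ≠ dPoly St := by
    intro heq
    set e : S l := ∏ β ∈ St.pos.erase α, linPoly β with he
    have hd : dPoly St = linPoly α * e := by
      rw [dPoly, he, Finset.mul_prod_erase _ _ hα]
    have hsα : polyAct (St.s α) (linPoly α) = -linPoly α := by
      rw [polyAct_linPoly, s_symm St hαr]
      have : α ∘ₗ (St.s α).toLinearEquiv.toLinearMap = -α := by
        ext x
        simpa using mu_s St hαr x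
      rw [this, linPoly_neg]
    have hEe : polyAct (St.s α) e = -e := by
      have h1 : -linPoly α * polyAct (St.s α) e = linPoly α * e := by
        rw [← hsα, ← map_mul, ← hd, heq, hd]
      have h2 : linPoly α * (polyAct (St.s α) e + e) = 0 := by
        rw [mul_add, ← h1]; ring
      rcases mul_eq_zero.mp h2 with h3 | h3
      · exact absurd h3 (linPoly_ne_zero hα0)
      · exact eq_neg_of_add_eq_zero_left h3
    obtain ⟨x₀, hx0, hx⟩ := exists_generic_aux α (St.pos.erase α)
      (fun β hβ => restriction_ne_zero St hα hβ)
    have hev : MvPolynomial.eval (toFun x₀) e ≠ 0 := by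
      rw [he, map_prod]
      rw [Finset.prod_ne_zero_iff]
      intro β hβ
      rw [eval_linPoly, ofFun_toFun]
      exact hx β hβ
    have hfix : St.s α x₀ = x₀ := by
      rw [St.s_apply α hαr]
      exact reflKer_fixed hx0
    have heval : MvPolynomial.eval (toFun x₀) (polyAct (St.s α) e) =
        MvPolynomial.eval (toFun x₀) e := by
      rw [eval_polyAct, ofFun_toFun, s_symm St hαr, hfix]
    rw [hEe, map_neg] at heval
    have : MvPolynomial.eval (toFun x₀) e = 0 := by linarith
    exact hev this
  rw [eps, if_neg hne]

end Stmt11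
namespace Stmt11

variable {l : ℕ}

open MvPolynomial

/-- the alternation (skew-symmetrization) operator -/
def altP (St : Setting l) (f : S l) : S l :=
  ∑ w ∈ St.W_finite.toFinset, C (eps St w) * polyAct w f

lemma mem_Wfin {St : Setting l} {w : V l ≃ₗᵢ[ℝ] V l} :
    w ∈ St.W_finite.toFinset ↔ w ∈ St.W := Set.Finite.mem_toFinset _

set_option maxHeartbeats 1000000 in
lemma alt_skew (St : Setting l) {α : V l →ₗ[ℝ] ℝ} (hα : α ∈ St.pos) (f : S l) :
    polyAct (St.s α) (altP St f) = -altP St f := by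
  have hαr : α ∈ St.roots := St.pos_subset hα
  have hsW : St.s α ∈ St.W := St.s_mem α hαr
  rw [altP, map_sum]
  have hterm : ∀ w ∈ St.W_finite.toFinset,
      polyAct (St.s α) (C (eps St w) * polyAct w f) =
        -(C (eps St (St.s α * w)) * polyAct (St.s α * w) f) := by
    intro w hw
    have hwW : w ∈ St.W := mem_Wfin.mp hw
    rw [map_mul, polyAct_C, ← polyAct_mul]
    have heps : eps St (St.s α * w) = -eps St w := by
      rw [eps_mul St hsW hwW, eps_s St hα]
      ring
    rw [heps, map_neg]
    ring
  rw [Finset.sum_congr rfl hterm, Finset.sum_neg_distrib]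
  rw [neg_inj]
  refine Finset.sum_bij' (fun w _ => St.s α * w) (fun w _ => St.s α * w) ?_ ?_ ?_ ?_ ?_
  · intro w hw
    exact mem_Wfin.mpr (mul_mem hsW (mem_Wfin.mp hw))
  · intro w hw
    exact mem_Wfin.mpr (mul_mem hsW (mem_Wfin.mp hw))
  · intro w hw
    show St.s α * (St.s α * w) = w
    rw [← mul_assoc, s_mul_self St hαr, one_mul]
  · intro w hw
    show St.s α * (St.s α * w) = w
    rw [← mul_assoc, s_mul_self St hαr, one_mul]
  · intro w hw
    rfl

lemma alt_mul_inv (St : Setting l) (f q : S l) (hq : ∀ w ∈ St.W, polyAct w q = q) :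
    altP St (f * q) = altP St f * q := by
  rw [altP, altP, Finset.sum_mul]
  apply Finset.sum_congr rfl
  intro w hw
  rw [map_mul, hq w (mem_Wfin.mp hw)]
  ring

lemma alt_sum (St : Setting l) {n : ℕ} (F : Fin n → S l) :
    altP St (∑ i, F i) = ∑ i, altP St (F i) := by
  rw [altP]
  have : ∀ w ∈ St.W_finite.toFinset,
      C (eps St w) * polyAct w (∑ i, F i) = ∑ i, C (eps St w) * polyAct w (F i) := by
    intro w hw
    rw [map_sum, Finset.mul_sum]
  rw [Finset.sum_congr rfl this, Finset.sum_comm]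
  rfl

lemma alt_dPoly (St : Setting l) :
    altP St (dPoly St) = C (St.W_finite.toFinset.card : ℝ) * dPoly St := by
  rw [altP]
  have hterm : ∀ w ∈ St.W_finite.toFinset,
      C (eps St w) * polyAct w (dPoly St) = dPoly St := by
    intro w hw
    rw [eps_spec St (mem_Wfin.mp hw), ← mul_assoc, ← map_mul]
    rcases eps_pm St w with h | h <;> rw [h] <;> norm_num
  rw [Finset.sum_congr rfl hterm, Finset.sum_const, nsmul_eq_mul, map_natCast]

lemma dPoly_dvd_alt (St : Setting l) (f : S l) : dPoly St ∣ altP St f := by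
  rw [dPoly]
  apply prod_linPoly_dvd St St.pos (subset_refl _)
  intro α hα
  have hα0 : α ≠ 0 := St.roots_ne_zero α (St.pos_subset hα)
  apply dvd_of_vanishing hα0
  intro x hx
  have hfix : St.s α x = x := by
    rw [St.s_apply α (St.pos_subset hα)]
    exact reflKer_fixed hx
  have h1 : MvPolynomial.eval (toFun x) (polyAct (St.s α) (altP St f)) =
      MvPolynomial.eval (toFun x) (altP St f) := by
    rw [eval_polyAct, ofFun_toFun, s_symm St (St.pos_subset hα), hfix]
  rw [alt_skew St hα, map_neg] at h1
  linarith

end Stmt11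

/-- The product of all positive roots `d = ∏_{α∈Π⁺} α` does not
belong to the ideal `I_W` generated by the nonconstant `W`-invariant polynomials. -/
theorem stmt_11 {l : ℕ} (St : Setting l) :
    dPoly St ∉ IW St := by
  open Stmt11 in
  intro hd
  rw [IW, ← Ideal.submodule_span_eq] at hd
  obtain ⟨n, r, g, hsum⟩ := Submodule.mem_span_set'.mp hd
  have hinv : ∀ i, ∀ w ∈ St.W, polyAct w (g i : S l) = (g i : S l) := fun i => (g i).2.1
  have hcc : ∀ i, MvPolynomial.constantCoeff (g i : S l) = 0 := fun i => (g i).2.2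
  have hch : ∀ i, ∃ h : S l, altP St (r i) = dPoly St * h := fun i => dPoly_dvd_alt St (r i)
  choose h hh using hch
  have halt : altP St (dPoly St) = dPoly St * ∑ i, h i * (g i : S l) := by
    have hterm : ∀ i : Fin n, altP St (r i • (g i : S l)) = dPoly St * (h i * (g i : S l)) := by
      intro i
      rw [smul_eq_mul, alt_mul_inv St (r i) (g i : S l) (hinv i), hh i, mul_assoc]
    conv_lhs => rw [← hsum]
    rw [alt_sum, Finset.sum_congr rfl (fun i _ => hterm i), ← Finset.mul_sum]
  rw [alt_dPoly] at halt
  have hH : MvPolynomial.C ((St.W_finite.toFinset.card : ℝ)) = ∑ i, h i * (g i : S l) := by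
    apply mul_left_cancel₀ (dPoly_ne_zero St)
    rw [← halt, mul_comm]
  have hcc2 := congrArg MvPolynomial.constantCoeff hH
  rw [MvPolynomial.constantCoeff_C, map_sum] at hcc2
  have hzero : ∀ i : Fin n, MvPolynomial.constantCoeff (h i * (g i : S l)) = 0 := by
    intro i
    rw [map_mul, hcc i, mul_zero]
  rw [Finset.sum_congr rfl (fun i _ => hzero i), Finset.sum_const, smul_zero] at hcc2
  have hne : St.W_finite.toFinset.Nonempty :=
    ⟨1, mem_Wfin.mpr St.W.one_mem⟩
  have : (St.W_finite.toFinset.card : ℝ) ≠ 0 :=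
    Nat.cast_ne_zero.mpr (Finset.card_ne_zero.mpr hne)
  exact this hcc2

end
end

section
/- Let I be a graded ideal of S with I_W ⊆ I and let 0 ≤ k ≤ N be such that the degree-(k+1) homogeneous components agree: I^{k+1} = I_W^{k+1}. Then for every f ∈ I^k, every 0 ≤ m ≤ k, every homogeneous polynomial h of degree m, and all positive roots α_1, …, α_m ∈ Π⁺, the polynomial h · (Δ_{α_1} ∘ ⋯ ∘ Δ_{α_m})(f) belongs to I^k. -/
open MvPolynomial

attribute [local instance] Classical.propDecidable

noncomputable section

variable {l : ℕ}

section Lemmas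
variable {l : ℕ}

theorem eval_linPoly (μ : V l →ₗ[ℝ] ℝ) (x : V l) : eval x (linPoly μ) = μ x := by
  have h := ((EuclideanSpace.basisFun (Fin l) ℝ).toBasis.sum_repr x)
  conv_rhs => rw [← h]
  simp [linPoly, OrthonormalBasis.coe_toBasis_repr_apply, EuclideanSpace.basisFun_repr,
    OrthonormalBasis.coe_toBasis, EuclideanSpace.basisFun_apply, mul_comm]

theorem eval_aeval' (G : Fin l → S l) (p : S l) (x : Fin l → ℝ) :
    eval x (aeval G p) = eval (fun i => eval x (G i)) p := by
  have h2 := MvPolynomial.comp_aeval_apply (f := G)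
    (MvPolynomial.aeval (R := ℝ) (S₁ := ℝ) x) p
  simpa [show ∀ (y : Fin l → ℝ) (p : S l), aeval y p = eval y p from fun _ _ => rfl] using h2

theorem eval_polyAct (g : V l ≃ₗᵢ[ℝ] V l) (f : S l) (x : V l) :
    eval x (polyAct g f) = eval (g.symm x) f := by
  rw [polyAct, eval_aeval']
  have : (fun i => eval x (linPoly ((EuclideanSpace.basisFun (Fin l) ℝ).toBasis.coord i ∘ₗ
      g.symm.toLinearEquiv.toLinearMap))) = (g.symm x : V l) := by
    funext i
    rw [eval_linPoly]
    simp [Module.Basis.coord_apply, OrthonormalBasis.coe_toBasis_repr_apply,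
      EuclideanSpace.basisFun_repr]
  rw [this]

theorem inner_dualVec (μ : V l →ₗ[ℝ] ℝ) (x : V l) : (inner ℝ (dualVec μ) x : ℝ) = μ x := by
  rw [dualVec, InnerProductSpace.toDual_symm_apply]
  rfl

theorem mu_dualVec (μ : V l →ₗ[ℝ] ℝ) : μ (dualVec μ) = ‖dualVec μ‖ ^ 2 := by
  rw [← inner_dualVec, real_inner_self_eq_norm_sq]

theorem dualVec_ne_zero {μ : V l →ₗ[ℝ] ℝ} (h : μ ≠ 0) : dualVec μ ≠ 0 := by
  intro h0
  apply h
  ext x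
  rw [← inner_dualVec, h0]
  simp

theorem mu_dualVec_ne_zero {μ : V l →ₗ[ℝ] ℝ} (h : μ ≠ 0) : μ (dualVec μ) ≠ 0 := by
  rw [mu_dualVec]
  exact pow_ne_zero 2 (norm_ne_zero_iff.mpr (dualVec_ne_zero h))

theorem reflKer_fix {μ : V l →ₗ[ℝ] ℝ} {x : V l} (h : μ x = 0) : reflKer μ x = x := by
  simp [reflKer, h]

theorem reflKer_invol {μ : V l →ₗ[ℝ] ℝ} (h : μ ≠ 0) (x : V l) :
    reflKer μ (reflKer μ x) = x := by
  have hd := mu_dualVec_ne_zero h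
  simp only [reflKer, map_sub, map_smul, smul_eq_mul]
  rw [sub_sub, ← add_smul]
  have : 2 * μ x / μ (dualVec μ) +
      2 * (μ x - 2 * μ x / μ (dualVec μ) * μ (dualVec μ)) / μ (dualVec μ) = 0 := by
    field_simp
    ring
  rw [this, zero_smul, sub_zero]

end Lemmas
section Lem2
variable {l : ℕ} (St : Setting l)

theorem s_s_apply {α : V l →ₗ[ℝ] ℝ} (hα : α ∈ St.roots) (x : V l) :
    St.s α (St.s α x) = x := by
  rw [St.s_apply α hα, St.s_apply α hα]
  exact reflKer_invol (St.roots_ne_zero α hα) x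

theorem s_symm_apply {α : V l →ₗ[ℝ] ℝ} (hα : α ∈ St.roots) (x : V l) :
    (St.s α).symm x = St.s α x := by
  conv_lhs => rw [← s_s_apply St hα x]
  exact (St.s α).symm_apply_apply _

theorem polyAct_s_invol {α : V l →ₗ[ℝ] ℝ} (hα : α ∈ St.roots) (f : S l) :
    polyAct (St.s α) (polyAct (St.s α) f) = f := by
  apply MvPolynomial.funext
  intro x
  rw [show x = ⇑(WithLp.toLp 2 x) from rfl, eval_polyAct, eval_polyAct,
    s_symm_apply St hα, s_symm_apply St hα, s_s_apply St hα]

theorem linPoly_ne_zero {μ : V l →ₗ[ℝ] ℝ} (h : μ ≠ 0) : linPoly μ ≠ 0 := by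
  intro h0
  apply h
  ext x
  have := eval_linPoly μ x
  rw [h0] at this
  simpa using this.symm

end Lem2
section Lem3
variable {l : ℕ}

theorem apply_ite_vec (μ : V l →ₗ[ℝ] ℝ) (x : Fin l → ℝ) (j : Fin l) (a : ℝ) :
    μ (WithLp.toLp 2 fun i => if i = j then a else x i) =
      μ (WithLp.toLp 2 x) + (a - x j) * μ (EuclideanSpace.single j 1) := by
  have hx : (WithLp.toLp 2 fun i => if i = j then a else x i) =
      (WithLp.toLp 2 x) + (a - x j) • EuclideanSpace.single j 1 := by
    ext i
    by_cases hij : i = j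
    · subst hij
      simp [EuclideanSpace.single_apply]
    · simp [hij, EuclideanSpace.single_apply, Ne.symm hij]
  rw [hx, map_add, map_smul, smul_eq_mul]

theorem X_dvd_sub_sub0 (j : Fin l) (q : S l) :
    (X j : S l) ∣ q - aeval (fun i => if i = j then 0 else X i) q := by
  induction q using MvPolynomial.induction_on' with
  | monomial m c =>
    by_cases hm : m j = 0
    · have : aeval (fun i => if i = j then (0 : S l) else X i) (monomial m c) = monomial m c := by
        rw [MvPolynomial.aeval_monomial]
        have : (m.prod fun i k => (if i = j then (0 : S l) else X i) ^ k) =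
            m.prod fun i k => (X i) ^ k := by
          apply Finsupp.prod_congr
          intro i hi
          have : i ≠ j := by
            intro h; apply Finsupp.mem_support_iff.mp hi; rw [h]; exact hm
          simp [this]
        rw [this, MvPolynomial.monomial_eq]
        rfl
      rw [this, sub_self]
      exact dvd_zero _
    · have h0 : aeval (fun i => if i = j then (0 : S l) else X i) (monomial m c) = 0 := by
        rw [MvPolynomial.aeval_monomial, Finsupp.prod]
        rw [Finset.prod_eq_zero (Finsupp.mem_support_iff.mpr hm)]
        · rw [mul_zero]
        · simp [zero_pow hm]
      rw [h0, sub_zero]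
      have hmeq : m = Finsupp.single j 1 + (m - Finsupp.single j 1) := by
        ext i
        by_cases hij : i = j
        · subst hij
          simp only [Finsupp.coe_add, Finsupp.coe_tsub, Pi.add_apply, Pi.sub_apply,
            Finsupp.single_eq_same]
          omega
        · simp [Finsupp.single_eq_of_ne' (Ne.symm hij)]
      rw [hmeq, MvPolynomial.monomial_single_add, pow_one]
      exact Dvd.intro _ rfl
  | add p q hp hq =>
    have : p + q - aeval (fun i => if i = j then (0 : S l) else X i) (p + q) =
        (p - aeval (fun i => if i = j then (0 : S l) else X i) p) +
        (q - aeval (fun i => if i = j then (0 : S l) else X i) q) := by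
      rw [map_add]; ring
    rw [this]
    exact dvd_add hp hq

end Lem3
section Lem4
variable {l : ℕ}

theorem eval_linPoly'' (μ : V l →ₗ[ℝ] ℝ) (x : Fin l → ℝ) :
    eval x (linPoly μ) = μ (WithLp.toLp 2 x) := eval_linPoly μ (WithLp.toLp 2 x)

theorem divDiff_exists (St : Setting l) {α : V l →ₗ[ℝ] ℝ} (hα : α ∈ St.roots) (f : S l) :
    ∃ c : S l, f - polyAct (St.s α) f = linPoly α * c := by
  set p := f - polyAct (St.s α) f with hp
  have hα0 : α ≠ 0 := St.roots_ne_zero α hα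
  have hj : ∃ j : Fin l, α (EuclideanSpace.single j 1) ≠ 0 := by
    by_contra hcon
    push_neg at hcon
    apply linPoly_ne_zero hα0
    simp [linPoly, hcon]
  obtain ⟨j, hj⟩ := hj
  set cj := α (EuclideanSpace.single j 1) with hcj
  set G : Fin l → S l :=
    fun i => if i = j then C cj⁻¹ * (X j - (linPoly α - C cj * X j)) else X i with hG
  set H : Fin l → S l := fun i => if i = j then linPoly α else X i with hH
  have keyH : ∀ x : Fin l → ℝ, (fun i => eval x (H i)) =
      fun i => if i = j then α (WithLp.toLp 2 x) else x i := by
    intro x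
    funext i
    by_cases hij : i = j <;> simp [hH, hij, eval_linPoly'']
  have keyG : ∀ y : Fin l → ℝ, (fun i => eval y (G i)) =
      fun i => if i = j then cj⁻¹ * (y j - (α (WithLp.toLp 2 y) - cj * y j)) else y i := by
    intro y
    funext i
    by_cases hij : i = j <;> simp [hG, hij, eval_linPoly'']
  have hfix : ∀ q : S l, aeval H (aeval G q) = q := by
    intro q
    apply MvPolynomial.funext
    intro x
    rw [eval_aeval', keyH x, eval_aeval', keyG]
    have : (fun i => if i = j then
        cj⁻¹ * ((fun i' => if i' = j then α (WithLp.toLp 2 x) else x i') j -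
          (α (WithLp.toLp 2 fun i' => if i' = j then α (WithLp.toLp 2 x) else x i') -
            cj * (fun i' => if i' = j then α (WithLp.toLp 2 x) else x i') j))
        else (fun i' => if i' = j then α (WithLp.toLp 2 x) else x i') i) = x := by
      funext i
      by_cases hij : i = j
      · subst hij
        simp only [if_pos rfl, eq_self_iff_true, if_true]
        rw [apply_ite_vec α x i (α (WithLp.toLp 2 x))]
        field_simp
        ring
      · simp [hij]
    rw [this]
  have hsub0 : aeval (fun i => if i = j then (0 : S l) else X i) (aeval G p) = 0 := by
    apply MvPolynomial.funext
    intro x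
    rw [eval_aeval']
    have hu : (fun i => eval x (if i = j then (0 : S l) else X i)) =
        fun i => if i = j then (0 : ℝ) else x i := by
      funext i
      by_cases hij : i = j <;> simp [hij]
    rw [hu, eval_aeval', keyG]
    set u : Fin l → ℝ := fun i => if i = j then (0 : ℝ) else x i with hudef
    set z : Fin l → ℝ :=
      fun i => if i = j then cj⁻¹ * (u j - (α (WithLp.toLp 2 u) - cj * u j)) else u i with hz
    have hzα : α (WithLp.toLp 2 z) = 0 := by
      rw [hz, apply_ite_vec α u j]
      have huj : u j = 0 := by simp [hudef]
      rw [huj, ← hcj]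
      field_simp
      ring
    have heval : eval z p = 0 := by
      rw [hp, map_sub]
      have h2 : eval z (polyAct (St.s α) f) = eval z f := by
        have h3 := eval_polyAct (St.s α) f (WithLp.toLp 2 z)
        rw [h3, s_symm_apply St hα, St.s_apply α hα, reflKer_fix hzα]
      rw [h2, sub_self]
    rw [heval]
    simp
  obtain ⟨r, hr⟩ := X_dvd_sub_sub0 j (aeval G p)
  rw [hsub0, sub_zero] at hr
  refine ⟨aeval H r, ?_⟩
  conv_lhs => rw [← hfix p]
  rw [hr, map_mul]
  congr 1
  simp [hH]

end Lem4
section Lem5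
variable {l : ℕ}

theorem divDiff_eq (St : Setting l) {α : V l →ₗ[ℝ] ℝ} (hα : α ∈ St.roots) (f : S l) :
    linPoly α * divDiff St α f = f - polyAct (St.s α) f := by
  rw [divDiff, dif_pos (divDiff_exists St hα f)]
  exact (Exists.choose_spec (divDiff_exists St hα f)).symm

theorem divDiff_unique (St : Setting l) {α : V l →ₗ[ℝ] ℝ} (hα : α ∈ St.roots) (f c : S l)
    (hc : linPoly α * c = f - polyAct (St.s α) f) : divDiff St α f = c := by
  have h0 := linPoly_ne_zero (St.roots_ne_zero α hα)
  apply mul_left_cancel₀ h0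
  rw [divDiff_eq St hα, hc]

theorem divDiff_add (St : Setting l) {α : V l →ₗ[ℝ] ℝ} (hα : α ∈ St.roots) (u v : S l) :
    divDiff St α (u + v) = divDiff St α u + divDiff St α v := by
  apply divDiff_unique St hα
  rw [mul_add, divDiff_eq St hα, divDiff_eq St hα, map_add]
  ring

theorem divDiff_mul (St : Setting l) {α : V l →ₗ[ℝ] ℝ} (hα : α ∈ St.roots) (u v : S l) :
    divDiff St α (u * v) =
      divDiff St α u * v + polyAct (St.s α) u * divDiff St α v := by
  apply divDiff_unique St hα
  have h1 := divDiff_eq St hα u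
  have h2 := divDiff_eq St hα v
  rw [map_mul]
  linear_combination v * h1 + polyAct (St.s α) u * h2

theorem divDiff_invariant (St : Setting l) {α : V l →ₗ[ℝ] ℝ} (hα : α ∈ St.roots) (u : S l)
    (hu : polyAct (St.s α) u = u) : divDiff St α u = 0 := by
  apply divDiff_unique St hα
  rw [hu, mul_zero, sub_self]

theorem divDiff_IW (St : Setting l) {α : V l →ₗ[ℝ] ℝ} (hα : α ∈ St.roots) (u : S l)
    (hu : u ∈ IW St) : divDiff St α u ∈ IW St := by
  rw [IW] at hu
  refine (Submodule.span_induction (p := fun x _ => x ∈ IW St ∧ divDiff St α x ∈ IW St)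
    ?_ ?_ ?_ ?_ hu).2
  · intro x hx
    refine ⟨Ideal.subset_span hx, ?_⟩
    rw [divDiff_invariant St hα x (hx.1 (St.s α) (St.s_mem α hα))]
    exact Submodule.zero_mem _
  · constructor
    · exact Submodule.zero_mem _
    · rw [divDiff_invariant St hα 0 (map_zero _)]
      exact Submodule.zero_mem _
  · intro x y _ _ hx hy
    refine ⟨Ideal.add_mem _ hx.1 hy.1, ?_⟩
    rw [divDiff_add St hα]
    exact Ideal.add_mem _ hx.2 hy.2
  · intro r x _ hx
    refine ⟨Ideal.mul_mem_left _ r hx.1, ?_⟩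
    rw [smul_eq_mul, divDiff_mul St hα]
    exact Ideal.add_mem _ (Ideal.mul_mem_left _ _ hx.1) (Ideal.mul_mem_left _ _ hx.2)

end Lem5
section Lem6
variable {l : ℕ}

theorem linPoly_isHomogeneous (μ : V l →ₗ[ℝ] ℝ) : (linPoly μ).IsHomogeneous 1 := by
  rw [linPoly]
  apply MvPolynomial.IsHomogeneous.sum
  intro i _
  simpa using (MvPolynomial.isHomogeneous_C (Fin l)
    (μ (EuclideanSpace.single i 1))).mul (MvPolynomial.isHomogeneous_X ℝ i)

theorem aeval_isHomogeneous (G : Fin l → S l) (hG : ∀ i, (G i).IsHomogeneous 1)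
    {n : ℕ} (p : S l) (hp : p.IsHomogeneous n) : (aeval G p).IsHomogeneous n := by
  conv_lhs => rw [MvPolynomial.as_sum p]
  rw [map_sum]
  apply MvPolynomial.IsHomogeneous.sum
  intro m hm
  rw [MvPolynomial.aeval_monomial]
  have hdeg : m.degree = n := by
    have := hp (MvPolynomial.mem_support_iff.mp hm)
    rwa [Finsupp.degree_eq_weight_one]
  have hprod : (m.prod fun i k => G i ^ k).IsHomogeneous m.degree := by
    rw [Finsupp.prod, Finsupp.degree]
    apply MvPolynomial.IsHomogeneous.prod
    intro i _
    simpa using (hG i).pow (m i)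
  have := (MvPolynomial.isHomogeneous_C (Fin l) (coeff m p)).mul (hdeg ▸ hprod)
  simpa using this

theorem polyAct_isHomogeneous (g : V l ≃ₗᵢ[ℝ] V l) {n : ℕ} (f : S l)
    (hf : f.IsHomogeneous n) : (polyAct g f).IsHomogeneous n := by
  rw [polyAct]
  exact aeval_isHomogeneous _ (fun i => linPoly_isHomogeneous _) f hf

theorem isHomogeneous_of_mul {a c : S l} (ha : a.IsHomogeneous 1) (ha0 : a ≠ 0)
    {n : ℕ} (h : (a * c).IsHomogeneous (n + 1)) : c.IsHomogeneous n := by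
  have hcomp : ∀ d : ℕ, homogeneousComponent (n + 1) (a * homogeneousComponent d c) =
      if n + 1 = 1 + d then a * homogeneousComponent d c else 0 := by
    intro d
    exact MvPolynomial.homogeneousComponent_of_mem
      ((mem_homogeneousSubmodule _ _).mpr
        (ha.mul (MvPolynomial.homogeneousComponent_isHomogeneous d c)))
  have hdecomp : a * c = a * homogeneousComponent n c := by
    have h1 : a * c = homogeneousComponent (n + 1) (a * c) := by
      rw [MvPolynomial.homogeneousComponent_of_mem
        ((mem_homogeneousSubmodule _ _).mpr h), if_pos rfl]
    conv_lhs => rw [h1]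
    conv_lhs => rw [← MvPolynomial.sum_homogeneousComponent c]
    rw [Finset.mul_sum, map_sum]
    have h2 : ∀ x ∈ Finset.range (c.totalDegree + 1),
        homogeneousComponent (n + 1) (a * homogeneousComponent x c) =
        if x = n then a * homogeneousComponent x c else 0 := by
      intro x _
      rw [hcomp x]
      by_cases hx : x = n
      · subst hx; rw [if_pos (by omega), if_pos rfl]
      · rw [if_neg (by omega), if_neg hx]
    rw [Finset.sum_congr rfl h2, Finset.sum_ite_eq' (Finset.range (c.totalDegree + 1)) n
      (fun x => a * homogeneousComponent x c)]
    by_cases hn : n ∈ Finset.range (c.totalDegree + 1)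
    · rw [if_pos hn]
    · rw [if_neg hn]
      have : homogeneousComponent n c = 0 := by
        apply MvPolynomial.homogeneousComponent_eq_zero
        simp only [Finset.mem_range] at hn
        omega
      rw [this, mul_zero]
  have := mul_left_cancel₀ ha0 hdecomp
  rw [this]
  exact MvPolynomial.homogeneousComponent_isHomogeneous n c

end Lem6
section Lem7
variable {l : ℕ}

theorem divDiff_isHomogeneous (St : Setting l) {α : V l →ₗ[ℝ] ℝ} (hα : α ∈ St.roots)
    {n : ℕ} (f : S l) (hf : f.IsHomogeneous (n + 1)) :
    (divDiff St α f).IsHomogeneous n := by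
  apply isHomogeneous_of_mul (linPoly_isHomogeneous α)
    (linPoly_ne_zero (St.roots_ne_zero α hα))
  rw [divDiff_eq St hα]
  exact hf.sub (polyAct_isHomogeneous _ f hf)

theorem degree_sub_single {m : Fin l →₀ ℕ} {i : Fin l} (hi : m i ≠ 0) :
    m = Finsupp.single i 1 + (m - Finsupp.single i 1) ∧
      (m - Finsupp.single i 1).degree + 1 = m.degree := by
  have hmeq : m = Finsupp.single i 1 + (m - Finsupp.single i 1) := by
    ext i'
    by_cases hii : i' = i
    · subst hii
      simp only [Finsupp.coe_add, Finsupp.coe_tsub, Pi.add_apply, Pi.sub_apply,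
        Finsupp.single_eq_same]
      omega
    · simp [Finsupp.single_eq_of_ne' (Ne.symm hii)]
  refine ⟨hmeq, ?_⟩
  have h1 : Finsupp.degree (Finsupp.single i 1) = 1 := by
    simp [Finsupp.degree_apply, Finsupp.support_single_ne_zero _ one_ne_zero]
  have h2 : m.degree = Finsupp.degree (Finsupp.single i 1) +
      Finsupp.degree (m - Finsupp.single i 1) := by
    conv_lhs => rw [hmeq]
    rw [Finsupp.degree_eq_weight_one, map_add]
  omega

theorem mul_mem_of_succ (I : Ideal (S l)) {g : S l} {n : ℕ}
    (hg : ∀ h : S l, h.IsHomogeneous n → h * g ∈ I) {h : S l}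
    (hh : h.IsHomogeneous (n + 1)) : h * g ∈ I := by
  rw [MvPolynomial.as_sum h, Finset.sum_mul]
  apply Ideal.sum_mem
  intro m hm
  have hdeg : m.degree = n + 1 := by
    rw [Finsupp.degree_eq_weight_one]
    exact hh (MvPolynomial.mem_support_iff.mp hm)
  have hex : ∃ i, m i ≠ 0 := by
    by_contra hc
    push_neg at hc
    have hm0 : m = 0 := Finsupp.ext fun i => hc i
    rw [hm0] at hdeg
    simp at hdeg
  obtain ⟨i, hi⟩ := hex
  obtain ⟨hmeq, hdeg'⟩ := degree_sub_single hi
  rw [hmeq, MvPolynomial.monomial_single_add, pow_one, mul_assoc]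
  apply Ideal.mul_mem_left
  apply hg
  apply MvPolynomial.isHomogeneous_monomial
  omega

end Lem7
section Main
variable {l : ℕ}

theorem main_ind (St : Setting l) (I : Ideal (S l)) (hIW : IW St ≤ I) (k : ℕ)
    (hagree : gradedPiece I (k + 1) = gradedPiece (IW St) (k + 1)) :
    ∀ L : List (V l →ₗ[ℝ] ℝ), (∀ α ∈ L, α ∈ St.pos) → ∀ j, L.length + j = k →
    ∀ f, f ∈ I → f.IsHomogeneous k →
      ((L.foldr (fun α F => divDiff St α ∘ F) id) f).IsHomogeneous j ∧
      ∀ h : S l, h.IsHomogeneous L.length →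
        h * (L.foldr (fun α F => divDiff St α ∘ F) id) f ∈ I := by
  intro L
  induction L with
  | nil =>
    intro _ j hj f hfI hf
    simp only [List.foldr_nil, id_eq]
    constructor
    · simpa [show j = k by simpa using hj] using hf
    · intro h _
      exact Ideal.mul_mem_left _ _ hfI
  | cons α L ih =>
    intro hmem j hj f hfI hf
    have hαpos : α ∈ St.pos := hmem α (by simp)
    have hαroot : α ∈ St.roots := St.pos_subset hαpos
    have hL : ∀ β ∈ L, β ∈ St.pos := fun β hβ => hmem β (List.mem_cons_of_mem _ hβ)
    have hlen : L.length + (j + 1) = k := by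
      simp only [List.length_cons] at hj
      omega
    obtain ⟨hghom, hgI⟩ := ih hL (j + 1) hlen f hfI hf
    set g := (L.foldr (fun α F => divDiff St α ∘ F) id) f with hg
    have hfold : ((α :: L).foldr (fun α F => divDiff St α ∘ F) id) f = divDiff St α g := by
      rw [List.foldr_cons]
      rfl
    rw [hfold]
    refine ⟨divDiff_isHomogeneous St hαroot g hghom, ?_⟩
    intro h hh
    rw [List.length_cons] at hh
    set h' := polyAct (St.s α) h with hh'
    have hh'hom : h'.IsHomogeneous (L.length + 1) := polyAct_isHomogeneous _ h hh
    have hinv : polyAct (St.s α) h' = h := polyAct_s_invol St hαroot h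
    have h'gI : h' * g ∈ I := mul_mem_of_succ I hgI hh'hom
    have h'ghom : (h' * g).IsHomogeneous (k + 1) := by
      have := hh'hom.mul hghom
      rwa [show L.length + 1 + (j + 1) = k + 1 by omega] at this
    have h'gIW : h' * g ∈ IW St := by
      have hmem2 : h' * g ∈ gradedPiece I (k + 1) := by
        rw [gradedPiece]
        exact Submodule.mem_inf.mpr ⟨h'gI, (mem_homogeneousSubmodule _ _).mpr h'ghom⟩
      rw [hagree, gradedPiece] at hmem2
      exact (Submodule.mem_inf.mp hmem2).1
    have hdI : divDiff St α (h' * g) ∈ I := hIW (divDiff_IW St hαroot _ h'gIW)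
    have hΔh' : (divDiff St α h').IsHomogeneous L.length :=
      divDiff_isHomogeneous St hαroot h' hh'hom
    have h1 : divDiff St α h' * g ∈ I := hgI _ hΔh'
    have heq : h * divDiff St α g =
        divDiff St α (h' * g) - divDiff St α h' * g := by
      rw [divDiff_mul St hαroot, hinv]
      ring
    rw [heq]
    exact Ideal.sub_mem _ hdI h1

end Main
/-- Let `I` be a graded ideal of `S` with `I_W ⊆ I` and let
`0 ≤ k ≤ N` be such that the degree-`(k+1)` homogeneous components agree:
`I^{k+1} = I_W^{k+1}`. Then for every `f ∈ I^k`, every `0 ≤ m ≤ k`, every homogeneous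
polynomial `h` of degree `m`, and all positive roots `α₁, …, α_m ∈ Π⁺`, the polynomial
`h · (Δ_{α₁} ∘ ⋯ ∘ Δ_{α_m})(f)` belongs to `I^k`. -/
theorem stmt_12 {l : ℕ} (St : Setting l) (I : Ideal (S l))
    (hgraded : IsGradedIdeal I) (hIW : IW St ≤ I)
    (k : ℕ) (hk : k ≤ St.pos.card)
    (hagree : gradedPiece I (k + 1) = gradedPiece (IW St) (k + 1))
    (f : S l) (hfI : f ∈ I) (hfhom : f.IsHomogeneous k)
    (m : ℕ) (hm : m ≤ k) (h : S l) (hh : h.IsHomogeneous m)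
    (β : Fin m → (V l →ₗ[ℝ] ℝ)) (hβ : ∀ i, β i ∈ St.pos) :
    h * ((List.ofFn β).foldr (fun α F => divDiff St α ∘ F) id) f ∈ I ∧
    (h * ((List.ofFn β).foldr (fun α F => divDiff St α ∘ F) id) f).IsHomogeneous k := by
  have hmem : ∀ α ∈ List.ofFn β, α ∈ St.pos := by
    intro α hα
    obtain ⟨i, rfl⟩ := List.mem_ofFn.mp hα
    exact hβ i
  have hlen : (List.ofFn β).length + (k - m) = k := by
    rw [List.length_ofFn]
    omega
  obtain ⟨h1, h2⟩ := main_ind St I hIW k hagree (List.ofFn β) hmem (k - m) hlen f hfI hfhom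
  constructor
  · apply h2
    rw [List.length_ofFn]
    exact hh
  · have := hh.mul h1
    rwa [show m + (k - m) = k by omega] at this

end
end
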